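/- arXiv:2312.08433 — 8 statements merged into one kernel-verified Lean document; each statement's English description precedes it below -/
import Mathlib

section
/- Let n ≥ 1 and let k be a natural number. Then the sum of k^{C(G_M)} over all (2n−1)!! perfect matchings M of {1,…,2n} equals k(k+2)(k+4)⋯(k+2n−2), i.e., ∑_{M} k^{C(G_M)} = ∏_{j=0}^{n−1} (k + 2j). -/
/-!
Induct on `n` by splitting off the last black pair `{∗₀, ∗₁}`. A matching of the enlarged set
either pairs `∗₀` with `∗₁`, and this pair is then one extra component, or it matches `∗₀` with
some `u` and `∗₁` with some `v`; contracting the path `u — ∗₀ — ∗₁ — v` to the red edge `u — v`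
gives a matching of the old set with the same components, and every old matching arises this way
from exactly `2n` choices of `u`. So each step multiplies the sum by `k + 2n`.
-/

open scoped BigOperators

namespace GBS

/-- A perfect matching of `{1,…,2n}`, encoded as a fixed-point-free involution of `Fin (2*n)`:
the pairs of the matching are the orbits `{x, f x}`. -/
abbrev PerfectMatching (n : ℕ) : Type :=
  {f : Equiv.Perm (Fin (2 * n)) // (∀ x, f (f x) = x) ∧ ∀ x, f x ≠ x}

/-- The graph `G_M` on the `2n` vertices (0-indexed as `Fin (2*n)`): black edges join
`2j` and `2j+1` (i.e. vertices with the same `⌊·/2⌋`, which is the 0-indexed version of the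
1-indexed pairs `{2j-1, 2j}`), and red edges join `x` and `f x` for the matching `f`. -/
def matchGraph (n : ℕ) (f : Equiv.Perm (Fin (2 * n))) : SimpleGraph (Fin (2 * n)) where
  Adj u v := u ≠ v ∧ ((u : ℕ) / 2 = (v : ℕ) / 2 ∨ f u = v ∨ f v = u)
  symm := by
    constructor
    intro u v h
    refine ⟨h.1.symm, ?_⟩
    rcases h.2 with h2 | h2 | h2
    · exact Or.inl h2.symm
    · exact Or.inr (Or.inr h2)
    · exact Or.inr (Or.inl h2)
  loopless := ⟨fun u h => h.1 rfl⟩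

end GBS

namespace SimpleGraph

variable {V W β : Type*} {G : SimpleGraph V} {H : SimpleGraph W}

theorem Reachable.eq_of_forall_adj {q : V → β} (hq : ∀ a b, G.Adj a b → q a = q b) {a b : V}
    (hab : G.Reachable a b) : q a = q b := by
  obtain ⟨w⟩ := hab
  induction w with
  | nil => rfl
  | cons h _ ih => exact (hq _ _ h).trans ih

theorem Reachable.map_of_forall_adj {φ : V → W}
    (hφ : ∀ a b, G.Adj a b → H.Reachable (φ a) (φ b)) {a b : V} (hab : G.Reachable a b) :
    H.Reachable (φ a) (φ b) :=
  ConnectedComponent.exact <| hab.eq_of_forall_adj (q := H.connectedComponentMk ∘ φ)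
    fun a b h => ConnectedComponent.sound (hφ a b h)

def connectedComponentEquivOfRetraction (r : W → V) (s : V → W)
    (hr : ∀ x y, H.Adj x y → G.Reachable (r x) (r y))
    (hs : ∀ a b, G.Adj a b → H.Reachable (s a) (s b))
    (hrs : ∀ a, r (s a) = a) (hsr : ∀ x, H.Reachable x (s (r x))) :
    H.ConnectedComponent ≃ G.ConnectedComponent where
  toFun := Quot.lift (G.connectedComponentMk ∘ r) fun _ _ h =>
    ConnectedComponent.sound (h.map_of_forall_adj hr)
  invFun := Quot.lift (H.connectedComponentMk ∘ s) fun _ _ h =>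
    ConnectedComponent.sound (h.map_of_forall_adj hs)
  left_inv := ConnectedComponent.ind fun x => (ConnectedComponent.sound (hsr x)).symm
  right_inv := ConnectedComponent.ind fun a => congrArg G.connectedComponentMk (hrs a)

def connectedComponentSumEquiv (G : SimpleGraph V) (H : SimpleGraph W) :
    (G ⊕g H).ConnectedComponent ≃ G.ConnectedComponent ⊕ H.ConnectedComponent where
  toFun := Quot.lift (Sum.elim (.inl ∘ G.connectedComponentMk) (.inr ∘ H.connectedComponentMk))
    fun _ _ h => h.eq_of_forall_adj <| by
      rintro (a | a) (b | b) hab <;> simp_all [Adj.reachable]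
  invFun := Sum.elim (ConnectedComponent.map Embedding.sumInl.toHom)
    (ConnectedComponent.map Embedding.sumInr.toHom)
  left_inv := ConnectedComponent.ind <| by rintro (a | a) <;> rfl
  right_inv := by rintro (c | c) <;> induction c using ConnectedComponent.ind <;> rfl

theorem card_connectedComponent_sum [Finite V] [Finite W] (G : SimpleGraph V)
    (H : SimpleGraph W) :
    Nat.card (G ⊕g H).ConnectedComponent =
      Nat.card G.ConnectedComponent + Nat.card H.ConnectedComponent := by
  rw [Nat.card_congr (connectedComponentSumEquiv G H), Nat.card_sum]

theorem card_connectedComponent_top [Nonempty V] :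
    Nat.card (⊤ : SimpleGraph V).ConnectedComponent = 1 :=
  Nat.card_eq_one_iff_unique.2 ⟨preconnected_top.subsingleton_connectedComponent, inferInstance⟩

end SimpleGraph

namespace GBS

open Equiv Function

variable {α β γ : Type*}

abbrev PerfectMatchingOn (α : Type*) : Type _ :=
  {f : Perm α // (∀ x, f (f x) = x) ∧ ∀ x, f x ≠ x}

namespace PerfectMatchingOn

def congr (e : α ≃ γ) : PerfectMatchingOn α ≃ PerfectMatchingOn γ :=
  e.permCongr.subtypeEquiv fun f => by
    simp [Equiv.permCongr_apply, e.forall_congr_right.symm]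

theorem congr_apply (e : α ≃ γ) (f : PerfectMatchingOn α) (x : γ) :
    (congr e f).1 x = e (f.1 (e.symm x)) := rfl

theorem apply_eq_iff_eq_apply (f : PerfectMatchingOn α) {x y : α} : f.1 x = y ↔ x = f.1 y := by
  constructor <;> rintro rfl <;> simp [f.2.1]

def sumSwap (f : PerfectMatchingOn α) : PerfectMatchingOn (α ⊕ Fin 2) :=
  ⟨f.1.sumCongr (swap 0 1), by rintro (a | i) <;> simp [f.2.1], by
    rintro (a | i)
    · simp [f.2.2]
    · simpa using (swap_apply_ne_self_iff.2 ⟨by decide, by omega⟩ : swap (0 : Fin 2) 1 i ≠ i)⟩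

@[simp] theorem sumSwap_inl (f : PerfectMatchingOn α) (a : α) :
    (sumSwap f).1 (.inl a) = .inl (f.1 a) := rfl

@[simp] theorem sumSwap_inr (f : PerfectMatchingOn α) (i : Fin 2) :
    (sumSwap f).1 (.inr i) = .inr (swap 0 1 i) := rfl

theorem sumSwap_injective : Injective (sumSwap (α := α)) := fun f g h =>
  Subtype.ext <| Equiv.ext fun a => Sum.inl_injective (β := Fin 2) <| by
    simpa using congrArg (fun g : PerfectMatchingOn (α ⊕ Fin 2) => g.1 (.inl a)) h

theorem exists_sumSwap_eq (g : PerfectMatchingOn (α ⊕ Fin 2)) (hg : g.1 (.inr 0) = .inr 1) :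
    ∃ f, sumSwap f = g := by
  have hg' : g.1 (.inr 1) = .inr 0 := (apply_eq_iff_eq_apply g).2 hg.symm
  have hleft : ∀ a, ∃ b, g.1 (.inl a) = .inl b := by
    intro a
    rcases h : g.1 (.inl a) with b | i
    · exact ⟨b, rfl⟩
    · have h' := (apply_eq_iff_eq_apply g).1 h
      match i with
      | 0 => simp [hg] at h'
      | 1 => simp [hg'] at h'
  choose f hf using hleft
  have hinv : Involutive f := fun a => Sum.inl_injective <| by rw [← hf, ← hf, g.2.1]
  refine ⟨⟨hinv.toPerm, hinv, fun a h => g.2.2 (.inl a) (by simp_all)⟩, ?_⟩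
  refine Subtype.ext <| Equiv.ext ?_
  rintro (a | i)
  · exact (hf a).symm
  · match i with
    | 0 => exact hg.symm
    | 1 => exact hg'.symm

variable [DecidableEq α]

/-- Writing `∗ᵢ` for `.inr i`: conjugating `sumSwap f` by the transposition `∗₀ ↔ f u` turns the
pairs `{u, f u}`, `{∗₀, ∗₁}` into `{u, ∗₀}`, `{f u, ∗₁}`. -/
def rewire (f : PerfectMatchingOn α) (u : α) : PerfectMatchingOn (α ⊕ Fin 2) :=
  congr (swap (.inr 0) (.inl (f.1 u))) (sumSwap f)

@[simp] theorem rewire_inr_zero (f : PerfectMatchingOn α) (u : α) :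
    (rewire f u).1 (.inr 0) = .inl u := by
  simp [rewire, congr_apply, f.2.1, swap_apply_of_ne_of_ne, (f.2.2 u).symm]

@[simp] theorem rewire_inr_one (f : PerfectMatchingOn α) (u : α) :
    (rewire f u).1 (.inr 1) = .inl (f.1 u) := by
  simp [rewire, congr_apply, swap_apply_of_ne_of_ne]

theorem rewire_inl (f : PerfectMatchingOn α) {u a : α} (hu : a ≠ u) (hfu : a ≠ f.1 u) :
    (rewire f u).1 (.inl a) = .inl (f.1 a) := by
  simp [rewire, congr_apply, swap_apply_of_ne_of_ne, hfu, hu]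

theorem congr_swap_rewire (f : PerfectMatchingOn α) (u : α) :
    congr (swap (.inr 0) (.inl (f.1 u))) (rewire f u) = sumSwap f :=
  Subtype.ext <| Equiv.ext fun x => by simp [rewire, congr_apply]

def insertPair : PerfectMatchingOn α ⊕ PerfectMatchingOn α × α → PerfectMatchingOn (α ⊕ Fin 2) :=
  Sum.elim sumSwap fun p => rewire p.1 p.2

theorem insertPair_injective : Injective (insertPair (α := α)) := by
  have apply_eq {g g' : PerfectMatchingOn (α ⊕ Fin 2)} (h : g = g') (x) : g.1 x = g'.1 x := h ▸ rfl
  rintro (f | ⟨f, u⟩) (g | ⟨g, v⟩) h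
  · exact congrArg Sum.inl (sumSwap_injective h)
  · simpa [insertPair] using apply_eq h (.inr 0)
  · simpa [insertPair] using apply_eq h (.inr 0)
  · obtain rfl : u = v := by simpa [insertPair] using apply_eq h (.inr 0)
    have hfu : f.1 u = g.1 u := by simpa [insertPair] using apply_eq h (.inr 1)
    have hfg := congrArg (congr (swap (.inr 0) (.inl (f.1 u)))) h
    simp only [insertPair, Sum.elim_inr] at hfg
    rw [congr_swap_rewire, hfu, congr_swap_rewire] at hfg
    rw [sumSwap_injective hfg]

theorem insertPair_surjective : Surjective (insertPair (α := α)) := by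
  intro g
  by_cases hg : g.1 (.inr 0) = .inr 1
  · obtain ⟨f, rfl⟩ := exists_sumSwap_eq g hg
    exact ⟨.inl f, rfl⟩
  obtain ⟨v, hv⟩ : ∃ v, g.1 (.inr 1) = .inl v := by
    rcases h : g.1 (.inr 1) with v | i
    · exact ⟨v, rfl⟩
    · match i with
      | 0 => exact absurd ((apply_eq_iff_eq_apply g).1 h).symm hg
      | 1 => exact absurd h (g.2.2 _)
  set σ : Perm (α ⊕ Fin 2) := swap (.inr 0) (.inl v)
  obtain ⟨f, hf⟩ := exists_sumSwap_eq (congr σ g) <| by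
    simp [σ, congr_apply, ← (apply_eq_iff_eq_apply g).1 hv, swap_apply_of_ne_of_ne]
  refine ⟨.inr (f, f.1 v), ?_⟩
  have hσ : congr σ (congr σ g) = g := Subtype.ext <| Equiv.ext fun x => by simp [σ, congr_apply]
  simpa [insertPair, rewire, f.2.1, hf] using hσ

end PerfectMatchingOn

open SimpleGraph PerfectMatchingOn

def matchGraphOn (p : α → β) (f : α → α) : SimpleGraph α where
  Adj u v := u ≠ v ∧ (p u = p v ∨ f u = v ∨ f v = u)
  symm := ⟨fun _ _ h => ⟨h.1.symm, by tauto⟩⟩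
  loopless := ⟨fun _ h => h.1 rfl⟩

theorem matchGraph_eq_matchGraphOn (n : ℕ) (f : Perm (Fin (2 * n))) :
    matchGraph n f = matchGraphOn (fun u : Fin (2 * n) => (u : ℕ) / 2) f := rfl

def matchGraphOnCongr (e : α ≃ γ) (p : γ → β) (f : Perm α) :
    matchGraphOn (p ∘ e) f ≃g matchGraphOn p (e.permCongr f) where
  toEquiv := e
  map_rel_iff' := by
    simp [matchGraphOn, Equiv.permCongr_apply]

variable {p : α → β}

theorem matchGraphOn_adj_apply (f : PerfectMatchingOn α) (x : α) :
    (matchGraphOn p f.1).Adj x (f.1 x) :=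
  ⟨(f.2.2 x).symm, .inr (.inl rfl)⟩

theorem matchGraphOn_reachable_of_eq {f : α → α} {x y : α} (h : p x = p y) :
    (matchGraphOn p f).Reachable x y := by
  by_cases hxy : x = y
  · exact hxy ▸ .refl x
  · exact Adj.reachable ⟨hxy, .inl h⟩

variable {b : β}

theorem matchGraphOn_sumSwap (hb : ∀ a, p a ≠ b) (f : PerfectMatchingOn α) :
    matchGraphOn (Sum.elim p fun _ => b) (sumSwap f).1 = matchGraphOn p f.1 ⊕g ⊤ := by
  ext (a | i) (a' | j) <;> simp [matchGraphOn, hb, (hb _).symm]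

theorem card_connectedComponent_sumSwap [Finite α] (hb : ∀ a, p a ≠ b) (f : PerfectMatchingOn α) :
    Nat.card (matchGraphOn (Sum.elim p fun _ => b) (sumSwap f).1).ConnectedComponent =
      Nat.card (matchGraphOn p f.1).ConnectedComponent + 1 := by
  rw [matchGraphOn_sumSwap hb, card_connectedComponent_sum, card_connectedComponent_top]

/-- Contracts the path `u — ∗₀ — ∗₁ — f u` of the graph of `rewire f u` to the edge `u — f u`. -/
def contract (f : PerfectMatchingOn α) (u : α) : α ⊕ Fin 2 → α :=
  Sum.elim id ![u, f.1 u]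

theorem card_connectedComponent_rewire [DecidableEq α] (hb : ∀ a, p a ≠ b)
    (f : PerfectMatchingOn α) (u : α) :
    Nat.card (matchGraphOn (Sum.elim p fun _ => b) (rewire f u).1).ConnectedComponent =
      Nat.card (matchGraphOn p f.1).ConnectedComponent := by
  set G := matchGraphOn p f.1
  set H := matchGraphOn (Sum.elim p fun _ => b) (rewire f u).1
  have hH0 : H.Adj (.inr 0) (.inl u) := by
    simpa using matchGraphOn_adj_apply (rewire f u) (.inr 0)
  have hH1 : H.Adj (.inr 1) (.inl (f.1 u)) := by
    simpa using matchGraphOn_adj_apply (rewire f u) (.inr 1)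
  have hH01 : H.Reachable (.inr 0) (.inr 1) := matchGraphOn_reachable_of_eq rfl
  have hHf : ∀ a, H.Reachable (.inl a) (.inl (f.1 a)) := by
    intro a
    by_cases hau : a = u
    · subst hau
      exact (hH0.symm.reachable.trans hH01).trans hH1.reachable
    by_cases hafu : a = f.1 u
    · subst hafu
      rw [f.2.1]
      exact (hH1.symm.reachable.trans hH01.symm).trans hH0.reachable
    · exact Adj.reachable (by simpa [rewire_inl f hau hafu] using
        matchGraphOn_adj_apply (rewire f u) (.inl a))
  have hGu : G.Reachable u (f.1 u) := (matchGraphOn_adj_apply f u).reachable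
  have hG_inr : ∀ i, G.Reachable u (contract f u (.inr i))
    | 0 => .refl u
    | 1 => hGu
  have hG_apply : ∀ x, G.Reachable (contract f u x) (contract f u ((rewire f u).1 x)) := by
    rintro (a | i)
    · by_cases hau : a = u
      · subst hau
        rw [(apply_eq_iff_eq_apply _).2 (rewire_inr_zero f a).symm]
        rfl
      by_cases hafu : a = f.1 u
      · subst hafu
        rw [(apply_eq_iff_eq_apply _).2 (rewire_inr_one f u).symm]
        rfl
      · rw [rewire_inl f hau hafu]
        exact (matchGraphOn_adj_apply f a).reachable
    · match i with
      | 0 => rw [rewire_inr_zero]; rfl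
      | 1 => rw [rewire_inr_one]; rfl
  refine Nat.card_congr (connectedComponentEquivOfRetraction (contract f u) Sum.inl ?_ ?_
    (fun _ => rfl) ?_)
  · rintro x y ⟨-, hxy | rfl | rfl⟩
    · rcases x with a | i <;> rcases y with a' | j
      · exact matchGraphOn_reachable_of_eq hxy
      · exact absurd hxy (hb a)
      · exact absurd hxy.symm (hb a')
      · exact (hG_inr i).symm.trans (hG_inr j)
    · exact hG_apply x
    · exact (hG_apply y).symm
  · rintro a a' ⟨-, h | rfl | rfl⟩
    · exact matchGraphOn_reachable_of_eq h
    · exact hHf a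
    · exact (hHf a').symm
  · rintro (a | i)
    · rfl
    · match i with
      | 0 => exact hH0.reachable
      | 1 => exact hH1.reachable

theorem sum_pow_card_connectedComponent_sum_fin_two [Fintype α] [DecidableEq α]
    (hb : ∀ a, p a ≠ b) (k : ℕ) :
    ∑ g : PerfectMatchingOn (α ⊕ Fin 2),
        k ^ Nat.card (matchGraphOn (Sum.elim p fun _ => b) g.1).ConnectedComponent =
      (k + Fintype.card α) *
        ∑ f : PerfectMatchingOn α, k ^ Nat.card (matchGraphOn p f.1).ConnectedComponent := by
  rw [← (Equiv.ofBijective _ ⟨insertPair_injective, insertPair_surjective⟩).sum_comp,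
    Fintype.sum_sum_type, Fintype.sum_prod_type]
  simp only [Equiv.ofBijective_apply, insertPair, Sum.elim_inl, Sum.elim_inr,
    card_connectedComponent_sumSwap hb, card_connectedComponent_rewire hb, Finset.sum_const,
    Finset.card_univ, smul_eq_mul, pow_succ']
  rw [add_mul, Finset.mul_sum, Finset.mul_sum]

theorem div_two_comp_finSumFinEquiv (n : ℕ) :
    (fun u : Fin (2 * (n + 1)) => (u : ℕ) / 2) ∘ finSumFinEquiv =
      Sum.elim (fun u : Fin (2 * n) => (u : ℕ) / 2) fun _ => n := by
  ext (u | i) <;> simp; omega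

theorem sum_pow_card_connectedComponent_matchGraph_general (n k : ℕ) :
    ∑ f : PerfectMatching n, k ^ Nat.card (matchGraph n f.1).ConnectedComponent =
      ∏ j ∈ Finset.range n, (k + 2 * j) := by
  induction n with
  | zero => simp; decide
  | succ n ih =>
    have hcard (g : PerfectMatchingOn (Fin (2 * n) ⊕ Fin 2)) :
        Nat.card (matchGraph (n + 1) (congr finSumFinEquiv g).1).ConnectedComponent =
          Nat.card (matchGraphOn (Sum.elim (fun u : Fin (2 * n) => (u : ℕ) / 2) fun _ => n)
            g.1).ConnectedComponent := by
      rw [matchGraph_eq_matchGraphOn, ← div_two_comp_finSumFinEquiv]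
      exact Nat.card_congr (matchGraphOnCongr finSumFinEquiv _ g.1).connectedComponentEquiv.symm
    calc ∑ f : PerfectMatching (n + 1), k ^ Nat.card (matchGraph (n + 1) f.1).ConnectedComponent
        = ∑ g : PerfectMatchingOn (Fin (2 * n) ⊕ Fin 2), k ^ Nat.card (matchGraphOn
            (Sum.elim (fun u : Fin (2 * n) => (u : ℕ) / 2) fun _ => n) g.1).ConnectedComponent :=
          (Fintype.sum_equiv (congr finSumFinEquiv) _ _ fun g => by rw [hcard]).symm
      _ = ∏ j ∈ Finset.range (n + 1), (k + 2 * j) := by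
        rw [sum_pow_card_connectedComponent_sum_fin_two (fun u => by omega),
          Finset.prod_range_succ, ← ih, Fintype.card_fin, mul_comm]
        -- the two sums differ only in the `Decidable` instances inside their `Fintype` instances
        congr 3; exact Subsingleton.elim _ _

/-- For `n ≥ 1` and `k : ℕ`, the sum of `k^{C(G_M)}` over all perfect
matchings `M` of `{1,…,2n}` equals `k(k+2)⋯(k+2n-2)`. -/
theorem sum_pow_card_connectedComponent_matchGraph (n k : ℕ) (hn : 1 ≤ n) :
    ∑ f : PerfectMatching n, k ^ Nat.card (matchGraph n f.1).ConnectedComponent =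
      ∏ j ∈ Finset.range n, (k + 2 * j) :=
  sum_pow_card_connectedComponent_matchGraph_general n k

end GBS
end

section
/- Let n ≥ 1 and k ≥ 1 be natural numbers. Then ∑_{τ ∈ S_{2n}} ∑_{o : {1,…,n} → {1,…,k}} ∏_{j=1}^{n} [ o_{⌈τ(2j−1)/2⌉} = o_{⌈τ(2j)/2⌉} ] = 2^n · n! · ∏_{j=0}^{n−1} (k + 2j), where S_{2n} is the symmetric group on {1,…,2n}, ⌈·⌉ denotes the ceiling function (so ⌈x/2⌉ maps {1,…,2n} onto {1,…,n}), and [P] is the indicator which is 1 if P holds and 0 otherwise. -/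
/-!
Index the `2n` points by `α × Fin 2`, in blocks `{a} × Fin 2`, so that a permutation `τ`
matches `τ (a, 0)` with `τ (a, 1)`; let `F(α)` be the sum over `τ` of the number of colourings
of the blocks with all matched pairs monochromatic. Permuting points compatibly with the blocks
only relabels the colourings, so all `2(|α|+1)` values of `τ (none, 1)` contribute equally to
`F(Option α)`, and we may assume `τ (none, 1) = (none, 1)`. Then either
`τ (none, 0) = (none, 0)`: block `none` is matched with itself, takes any of the `k` colours,
and `τ` restricts to `α × Fin 2`; or `τ (none, 0)` is one of the `2|α|` points `p` outside
block `none`: composing with the transposition of `p` and `(none, 0)` again gives such a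
restriction, and block `none` is forced to have the colour of the block of `p`. Hence
`F(Option α) = 2(|α|+1)(k+2|α|) F(α)`.
-/

open scoped BigOperators

namespace GBS

/-- The 0-indexed version of the 1-indexed element `2j-1` of `{1,…,2n}`. -/
def lo (n : ℕ) (j : Fin n) : Fin (2 * n) := ⟨2 * (j : ℕ), by omega⟩

/-- The 0-indexed version of the 1-indexed element `2j` of `{1,…,2n}`. -/
def hi (n : ℕ) (j : Fin n) : Fin (2 * n) := ⟨2 * (j : ℕ) + 1, by omega⟩

/-- `half n x = ⌊x/2⌋` as a map `Fin (2*n) → Fin n`; with 0-indexing this is the map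
`ℓ ↦ ⌈ℓ/2⌉` of the 1-indexed statement, sending `{1,…,2n}` onto `{1,…,n}`. -/
def half (n : ℕ) (x : Fin (2 * n)) : Fin n := ⟨(x : ℕ) / 2, by omega⟩

open Equiv Finset

theorem sum_ite_forall_apply_inl_eq {m n M : Type*} [Fintype m] [DecidableEq m] [Fintype n]
    [DecidableEq n] [AddCommMonoid M] (f : Perm (m ⊕ n) → M) :
    ∑ σ : Perm (m ⊕ n), (if ∀ a, σ (Sum.inl a) = Sum.inl a then f σ else 0) =
      ∑ τ : Perm n, f (sumCongr 1 τ) := by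
  have hinj : Function.Injective fun τ : Perm n => (sumCongr 1 τ : Perm (m ⊕ n)) :=
    fun τ₁ τ₂ h => Equiv.ext fun x => by simpa using Equiv.congr_fun h (Sum.inr x)
  rw [← sum_filter, ← sum_image fun τ₁ _ τ₂ _ h => hinj h]
  congr 1
  ext σ
  simp only [mem_filter, mem_univ, true_and, mem_image]
  constructor
  · intro hσ
    obtain ⟨⟨σ₁, τ⟩, hσ'⟩ := Perm.mem_sumCongrHom_range_of_perm_mapsTo_inl (σ := σ)
      (by rintro _ ⟨a, rfl⟩; exact ⟨a, (hσ a).symm⟩)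
    have hσ₁ : σ₁ = 1 := Equiv.ext fun a => by simpa [← hσ'] using hσ a
    exact ⟨τ, by rw [← hσ', ← hσ₁]; rfl⟩
  · rintro ⟨τ, rfl⟩ a
    rfl

section

variable {α β : Type*}

def extendPerm (τ : Perm (α × β)) : Perm (Option α × β) :=
  optionProdEquiv.symm.permCongr (sumCongr 1 τ)

@[simp]
theorem extendPerm_none (τ : Perm (α × β)) (b : β) : extendPerm τ (none, b) = (none, b) := rfl

@[simp]
theorem extendPerm_some (τ : Perm (α × β)) (a : α) (b : β) :
    extendPerm τ (some a, b) = Prod.map some id (τ (a, b)) := rfl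

theorem sum_ite_forall_apply_none_eq [Fintype α] [DecidableEq α] [Fintype β] [DecidableEq β]
    [DecidablePred fun σ : Perm (Option α × β) => ∀ b, σ (none, b) = (none, b)]
    {M : Type*} [AddCommMonoid M] (f : Perm (Option α × β) → M) :
    ∑ σ : Perm (Option α × β), (if ∀ b, σ (none, b) = (none, b) then f σ else 0) =
      ∑ τ : Perm (α × β), f (extendPerm τ) := by
  refine (Fintype.sum_equiv optionProdEquiv.permCongr _ _ fun σ => ?_).trans
    (sum_ite_forall_apply_inl_eq fun σ => f (optionProdEquiv.symm.permCongr σ))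
  simp [← Equiv.eq_symm_apply, ← Equiv.permCongr_symm]

theorem swap_some_none_zero_apply_none_one [DecidableEq α] (v : α) (b : Fin 2) :
    swap (some v, b) (none, 0) (none, 1) = (none, 1) :=
  swap_apply_of_ne_of_ne (by simp) (by simp)

theorem piOptionEquivProd_symm_apply_eq_elim {K : Type*} (x : K) (f : α → K) (c : Option α) :
    (piOptionEquivProd.symm (x, f) : Option α → K) c = c.elim x f := by
  cases c <;> rfl

theorem elim_fst_swap_map_some [DecidableEq α] [DecidableEq β] {K : Type*} (f : α → K) (v : α)
    (b b' : β) (y : α × β) :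
    (swap (some v, b) (none, b') (Prod.map some id y)).1.elim (f v) f = f y.1 := by
  by_cases hy : y = (v, b)
  · subst hy
    simp
  · rw [swap_apply_of_ne_of_ne]
    · rfl
    · contrapose! hy
      ext <;> simp_all [Prod.ext_iff]
    · simp [Prod.ext_iff]

end

section

variable {α β K : Type*} [Fintype α] [DecidableEq α] [Fintype β] [DecidableEq β] [Fintype K]
  [DecidableEq K]

variable (K) in
def monochromaticColorings (τ : Perm (α × Fin 2)) : ℕ :=
  ∑ o : α → K, ∏ a, if o (τ (a, 0)).1 = o (τ (a, 1)).1 then 1 else 0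

variable (α K) in
def pairingSum : ℕ :=
  ∑ τ : Perm (α × Fin 2), monochromaticColorings K τ

theorem monochromaticColorings_mul_of_fst_eq {ρ : Perm (α × Fin 2)} (π : Perm α)
    (hρ : ∀ x, (ρ x).1 = π x.1) (τ : Perm (α × Fin 2)) :
    monochromaticColorings K (ρ * τ) = monochromaticColorings K τ :=
  Fintype.sum_equiv (π.symm.arrowCongr (Equiv.refl K)) _ _ fun o => by simp [hρ]

theorem sum_ite_apply_eq_mul_of_fst_eq {ρ : Perm (α × Fin 2)} (π : Perm α)
    (hρ : ∀ x, (ρ x).1 = π x.1) (x y : α × Fin 2) :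
    ∑ τ : Perm (α × Fin 2), (if τ x = y then monochromaticColorings K τ else 0) =
      ∑ τ : Perm (α × Fin 2), if τ x = ρ y then monochromaticColorings K τ else 0 :=
  Fintype.sum_equiv (Equiv.mulLeft ρ) _ _ fun τ => by
    simp [monochromaticColorings_mul_of_fst_eq π hρ]

theorem monochromaticColorings_extendPerm (τ : Perm (α × Fin 2)) :
    monochromaticColorings K (extendPerm τ) = Fintype.card K * monochromaticColorings K τ := by
  calc _ = ∑ p : K × (α → K), ∏ a, if p.2 (τ (a, 0)).1 = p.2 (τ (a, 1)).1 then 1 else 0 :=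
        Fintype.sum_equiv piOptionEquivProd _ _ fun o => by
          simp only [Fintype.prod_option, extendPerm_none, extendPerm_some, Prod.map_fst,
            piOptionEquivProd_apply, if_true, one_mul]
          rfl
    _ = ∑ _x : K, monochromaticColorings K τ := Fintype.sum_prod_type _
    _ = _ := by rw [sum_const, card_univ, smul_eq_mul]

theorem monochromaticColorings_swap_mul_extendPerm (τ : Perm (α × Fin 2)) (v : α) (b : Fin 2) :
    monochromaticColorings K (swap (some v, b) (none, 0) * extendPerm τ) =
      monochromaticColorings K τ := by
  rw [monochromaticColorings, ← piOptionEquivProd.symm.sum_comp, Fintype.sum_prod_type, sum_comm]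
  refine sum_congr rfl fun o _ => ?_
  simp only [piOptionEquivProd_symm_apply_eq_elim, Option.elim_none, Option.elim_some,
    Fintype.prod_option, Perm.mul_apply, extendPerm_none, extendPerm_some, swap_apply_right,
    swap_some_none_zero_apply_none_one, ite_mul, one_mul, zero_mul, sum_ite_eq, mem_univ, if_true,
    elim_fst_swap_map_some]

theorem pairingSum_option_eq_mul_sum_ite :
    pairingSum (Option α) K = 2 * (Fintype.card α + 1) *
      ∑ τ : Perm (Option α × Fin 2),
        if τ (none, 1) = (none, 1) then monochromaticColorings K τ else 0 := by
  have h : ∀ q : Option α × Fin 2,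
      ∑ τ : Perm (Option α × Fin 2),
          (if τ (none, 1) = q then monochromaticColorings K τ else 0) =
        ∑ τ : Perm (Option α × Fin 2),
          if τ (none, 1) = (none, 1) then monochromaticColorings K τ else 0 := fun q => by
    simpa [Prod.map] using sum_ite_apply_eq_mul_of_fst_eq (K := K)
      (ρ := prodCongr (swap q.1 none) (swap q.2 1)) (swap q.1 none) (fun _ => rfl) (none, 1) q
  calc _ = ∑ q : Option α × Fin 2, ∑ τ : Perm (Option α × Fin 2),
          if τ (none, 1) = q then monochromaticColorings K τ else 0 := by
        rw [Finset.sum_comm]; simp [pairingSum]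
    _ = _ := by
        simp only [h, sum_const, card_univ, Fintype.card_prod, Fintype.card_option,
          Fintype.card_fin, smul_eq_mul]
        ring

theorem sum_ite_apply_none_eq_some (v : α) (b : Fin 2) :
    ∑ τ : Perm (Option α × Fin 2), (if τ (none, 1) = (none, 1) ∧ τ (none, 0) = (some v, b)
      then monochromaticColorings K τ else 0) = pairingSum α K := by
  calc _ = ∑ τ : Perm (Option α × Fin 2), if ∀ i, τ (none, i) = (none, i) then
          monochromaticColorings K (swap (some v, b) (none, 0) * τ) else 0 :=
        (Fintype.sum_equiv (Equiv.mulLeft (swap (some v, b) (none, 0))) _ _ fun τ => by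
          have h1 := (swap (some v, b) (none, 0)).injective.eq_iff (a := τ (none, 1))
            (b := (none, 1))
          have h0 := (swap (some v, b) (none, 0)).injective.eq_iff (a := τ (none, 0))
            (b := (none, 0))
          rw [swap_some_none_zero_apply_none_one] at h1
          rw [swap_apply_right] at h0
          simp only [coe_mulLeft, Perm.mul_apply, h1, h0, Fin.forall_fin_two, and_comm]).symm
    _ = ∑ τ : Perm (α × Fin 2),
          monochromaticColorings K (swap (some v, b) (none, 0) * extendPerm τ) :=
        sum_ite_forall_apply_none_eq fun τ =>
          monochromaticColorings K (swap (some v, b) (none, 0) * τ)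
    _ = pairingSum α K := by simp only [monochromaticColorings_swap_mul_extendPerm, pairingSum]

theorem sum_ite_apply_none_eq_none :
    ∑ τ : Perm (Option α × Fin 2), (if τ (none, 1) = (none, 1) ∧ τ (none, 0) = (none, 0)
      then monochromaticColorings K τ else 0) = Fintype.card K * pairingSum α K := by
  calc _ = ∑ τ : Perm (Option α × Fin 2),
          if ∀ i, τ (none, i) = (none, i) then monochromaticColorings K τ else 0 := by
        simp only [Fin.forall_fin_two, and_comm]
    _ = ∑ τ : Perm (α × Fin 2), monochromaticColorings K (extendPerm τ) :=
        sum_ite_forall_apply_none_eq _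
    _ = Fintype.card K * pairingSum α K := by
        simp only [monochromaticColorings_extendPerm, pairingSum, mul_sum]

theorem sum_ite_apply_none_one_eq :
    ∑ τ : Perm (Option α × Fin 2),
        (if τ (none, 1) = (none, 1) then monochromaticColorings K τ else 0) =
      (Fintype.card K + 2 * Fintype.card α) * pairingSum α K := by
  have hcollide : ∀ τ : Perm (Option α × Fin 2),
      ¬(τ (none, 1) = (none, 1) ∧ τ (none, 0) = (none, 1)) := fun τ h => by
    simpa using τ.injective (h.2.trans h.1.symm)
  calc _ = ∑ p : Option α × Fin 2, ∑ τ : Perm (Option α × Fin 2),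
          if τ (none, 1) = (none, 1) ∧ τ (none, 0) = p then monochromaticColorings K τ
          else 0 := by
        rw [sum_comm]
        refine sum_congr rfl fun τ _ => ?_
        simp [ite_and]
    _ = Fintype.card K * pairingSum α K + 0 + ∑ _v : α, ∑ _i : Fin 2, pairingSum α K := by
        rw [Fintype.sum_prod_type, Fintype.sum_option, Fin.sum_univ_two, sum_ite_apply_none_eq_none]
        simp only [sum_ite_apply_none_eq_some, if_neg (hcollide _), sum_const_zero]
    _ = (Fintype.card K + 2 * Fintype.card α) * pairingSum α K := by
        simp only [sum_const, card_univ, Fintype.card_fin, smul_eq_mul]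
        ring

theorem pairingSum_option :
    pairingSum (Option α) K =
      2 * (Fintype.card α + 1) * ((Fintype.card K + 2 * Fintype.card α) * pairingSum α K) := by
  rw [pairingSum_option_eq_mul_sum_ite, sum_ite_apply_none_one_eq]

theorem monochromaticColorings_permCongr (e : α ≃ β) (τ : Perm (α × Fin 2)) :
    monochromaticColorings K ((e.prodCongr (Equiv.refl (Fin 2))).permCongr τ) =
      monochromaticColorings K τ :=
  Fintype.sum_equiv (e.symm.arrowCongr (Equiv.refl K)) _ _ fun o =>
    Fintype.prod_equiv e.symm _ _ fun b => by simp

theorem pairingSum_congr (e : α ≃ β) : pairingSum α K = pairingSum β K :=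
  Fintype.sum_equiv (e.prodCongr (Equiv.refl (Fin 2))).permCongr _ _ fun τ =>
    (monochromaticColorings_permCongr e τ).symm

theorem pairingSum_fin (n : ℕ) :
    pairingSum (Fin n) K = 2 ^ n * n.factorial * ∏ j ∈ range n, (Fintype.card K + 2 * j) := by
  induction n with
  | zero => simp [pairingSum, monochromaticColorings]
  | succ n ih =>
    rw [pairingSum_congr (finSuccEquiv n), pairingSum_option, ih, Fintype.card_fin,
      prod_range_succ, pow_succ, Nat.factorial_succ]
    ring

end

def finPairEquiv (n : ℕ) : Fin n × Fin 2 ≃ Fin (2 * n) :=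
  finProdFinEquiv.trans (finCongr (mul_comm n 2))

theorem finPairEquiv_mk_zero (n : ℕ) (j : Fin n) : finPairEquiv n (j, 0) = lo n j :=
  Fin.ext (by simp [finPairEquiv, lo])

theorem finPairEquiv_mk_one (n : ℕ) (j : Fin n) : finPairEquiv n (j, 1) = hi n j :=
  Fin.ext (by simp [finPairEquiv, hi]; omega)

theorem fst_finPairEquiv_symm (n : ℕ) (y : Fin (2 * n)) :
    ((finPairEquiv n).symm y).1 = half n y := by
  obtain ⟨⟨j, i⟩, rfl⟩ := (finPairEquiv n).surjective y
  refine Fin.ext ?_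
  simp [finPairEquiv, half]
  omega

theorem sum_perm_sum_indices_indicator_general (n k : ℕ) :
    (∑ τ : Equiv.Perm (Fin (2 * n)), ∑ o : Fin n → Fin k,
        ∏ j : Fin n,
          (if o (half n (τ (lo n j))) = o (half n (τ (hi n j))) then 1 else 0 : ℕ)) =
      2 ^ n * n.factorial * ∏ j ∈ Finset.range n, (k + 2 * j) := by
  calc _ = pairingSum (Fin n) (Fin k) :=
        Fintype.sum_equiv (finPairEquiv n).symm.permCongr _ _ fun τ => by
          simp only [monochromaticColorings, permCongr_apply, symm_symm, finPairEquiv_mk_zero,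
            finPairEquiv_mk_one, fst_finPairEquiv_symm]
    _ = _ := by rw [pairingSum_fin, Fintype.card_fin]

/-- For `n, k ≥ 1`,
`∑_{τ ∈ S_{2n}} ∑_{o : {1,…,n} → {1,…,k}} ∏_{j=1}^{n} [o_{⌈τ(2j−1)/2⌉} = o_{⌈τ(2j)/2⌉}]
  = 2^n · n! · ∏_{j=0}^{n−1} (k + 2j)`. -/
theorem sum_perm_sum_indices_indicator (n k : ℕ) (hn : 1 ≤ n) (hk : 1 ≤ k) :
    (∑ τ : Equiv.Perm (Fin (2 * n)), ∑ o : Fin n → Fin k,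
        ∏ j : Fin n,
          (if o (half n (τ (lo n j))) = o (half n (τ (hi n j))) then 1 else 0 : ℕ)) =
      2 ^ n * n.factorial * ∏ j ∈ Finset.range n, (k + 2 * j) :=
  sum_perm_sum_indices_indicator_general n k

end GBS
end

section
/- Let n ≥ 1 and k ≥ 1 be natural numbers, and let X be a k×2n random matrix whose entries are independent standard complex Gaussian random variables. Then E[ |Haf(XᵀX)|² ] = ((2n)! / (2^n n!)) · ∏_{j=0}^{n−1} (k + 2j), equivalently E[|Haf(XᵀX)|²] = (2n−1)!! · (k+2n−2)!!/(k−2)!!. -/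
open scoped BigOperators
open MeasureTheory ProbabilityTheory Matrix

namespace GBS

/-- The distribution of a standard complex Gaussian random variable `Z = A + iB`, where `A, B`
are independent real Gaussians with mean `0` and variance `1/2` (so `E[Z] = 0`, `E[|Z|²] = 1`). -/
noncomputable def stdComplexGaussian : Measure ℂ :=
  Measure.map Complex.measurableEquivRealProd.symm
    ((gaussianReal 0 (1 / 2)).prod (gaussianReal 0 (1 / 2)))

instance : IsProbabilityMeasure stdComplexGaussian :=
  Measure.isProbabilityMeasure_map Complex.measurableEquivRealProd.symm.measurable.aemeasurable

/-- The distribution of a `k × 2n` random matrix with i.i.d. standard complex Gaussian entries,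
as a measure on `Fin k → Fin (2*n) → ℂ`. -/
noncomputable def gaussianMatrix (k n : ℕ) : Measure (Fin k → Fin (2 * n) → ℂ) :=
  Measure.pi fun _ => Measure.pi fun _ => stdComplexGaussian

/-- The hafnian of a `2n × 2n` complex matrix:
`Haf(A) = (1/(2^n n!)) ∑_{σ ∈ S_{2n}} ∏_{j=1}^n A_{σ(2j−1), σ(2j)}`. -/
noncomputable def hafnian (n : ℕ) (A : Matrix (Fin (2 * n)) (Fin (2 * n)) ℂ) : ℂ :=
  (1 / (2 ^ n * n.factorial : ℂ)) *
    ∑ σ : Equiv.Perm (Fin (2 * n)), ∏ j : Fin n, A (σ (lo n j)) (σ (hi n j))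

/-!
Expanding the entries of `XᵀX` writes `Haf(XᵀX)` as `(2ⁿ n!)⁻¹ ∑_{σ, f} ∏_a X_{f(⌊σ⁻¹(a)/2⌋), a}`:
a sum of monomials indexed by a permutation `σ` of the columns and a colouring `f` of the `n`
pairs by rows, each monomial using every column exactly once. Since the entries are independent
with `E[z] = 0` and `E[|z|²] = 1`, two monomials are orthogonal unless they pick the same row in
every column, in which case their product has expectation `1`. Hence `E|Haf|²` is `(2ⁿ n!)⁻²`
times the number of pairs of indices with the same row assignment.

For fixed `(σ, f)` with colour classes of sizes `m_c`, the pairs `(τ, g)` with the same assignment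
are found by orbit–stabiliser: `g` must have the same class sizes (`n! / ∏ m_c!` choices), and then
`τ` runs over a coset of the stabiliser of a function with fibres of sizes `2 m_c`
(`∏ (2 m_c)!` choices). This gives `2ⁿ n! ∏_c (2 m_c - 1)‼`. Summing over `f` one pair at a time,
a new pair of colour `c` multiplies the weight by `2 m_c + 1`, and `∑_c (2 m_c + 1) = k + 2j`
when `j` pairs are already coloured; this gives `∏_{j<n} (k + 2j)`.
-/

open Finset Equiv Nat ComplexConjugate

section Pairing

variable {n : ℕ}

def pairEquiv (n : ℕ) : Fin n × Fin 2 ≃ Fin (2 * n) :=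
  finProdFinEquiv.trans (finCongr (Nat.mul_comm n 2))

lemma pairEquiv_zero (j : Fin n) : pairEquiv n (j, 0) = lo n j := by
  ext; simp [pairEquiv, lo, finProdFinEquiv]

lemma pairEquiv_one (j : Fin n) : pairEquiv n (j, 1) = hi n j := by
  ext; simp [pairEquiv, hi, finProdFinEquiv]; ring

def pairIdx (n : ℕ) (a : Fin (2 * n)) : Fin n := ((pairEquiv n).symm a).1

@[simp] lemma pairIdx_lo (j : Fin n) : pairIdx n (lo n j) = j := by
  simp [pairIdx, ← pairEquiv_zero]

@[simp] lemma pairIdx_hi (j : Fin n) : pairIdx n (hi n j) = j := by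
  simp [pairIdx, ← pairEquiv_one]

lemma prod_fin_two_mul {M : Type*} [CommMonoid M] (F : Fin (2 * n) → M) :
    ∏ a, F a = ∏ j, F (lo n j) * F (hi n j) := by
  rw [← (pairEquiv n).prod_comp, Fintype.prod_prod_type]
  simp [Fin.prod_univ_two, pairEquiv_zero, pairEquiv_one]

lemma card_pairIdx_fiber {κ : Type*} [DecidableEq κ] (f : Fin n → κ) (c : κ) :
    #{a | f (pairIdx n a) = c} = 2 * #{j | f j = c} := by
  rw [card_equiv (pairEquiv n).symm (t := ({j | f j = c} : Finset (Fin n)) ×ˢ univ)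
      fun a => by simp only [mem_filter_univ, mem_product, mem_univ, and_true]; rfl,
    card_product, Finset.card_univ, Fintype.card_fin, mul_comm]

end Pairing

section HafnianExpansion

variable {n : ℕ} {κ : Type*} [Fintype κ]

def monomialRow (s : Perm (Fin (2 * n)) × (Fin n → κ)) (a : Fin (2 * n)) : κ :=
  s.2 (pairIdx n (s.1⁻¹ a))

theorem hafnian_transpose_mul_self (X : Matrix κ (Fin (2 * n)) ℂ) :
    hafnian n (Xᵀ * X) = (1 / (2 ^ n * n.factorial : ℂ)) *
      ∑ s : Perm (Fin (2 * n)) × (Fin n → κ), ∏ a, X (monomialRow s a) a := by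
  rw [hafnian, Fintype.sum_prod_type]
  congr 1
  refine sum_congr rfl fun σ _ => ?_
  simp only [mul_apply, transpose_apply]
  rw [Finset.prod_univ_sum]
  refine sum_congr rfl fun f _ => ?_
  rw [← Equiv.prod_comp σ, prod_fin_two_mul]
  simp [monomialRow]

end HafnianExpansion

section ComplexGaussian

lemma integral_sq_gaussianReal_zero (v : NNReal) : ∫ x, x ^ 2 ∂gaussianReal 0 v = v := by
  simpa [variance_eq_integral measurable_id'.aemeasurable] using
    variance_fun_id_gaussianReal (μ := 0) (v := v)

lemma map_re_stdComplexGaussian : stdComplexGaussian.map Complex.re = gaussianReal 0 (1 / 2) := by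
  rw [stdComplexGaussian, Measure.map_map Complex.measurable_re (MeasurableEquiv.measurable _)]
  exact (Measure.map_fst_prod).trans (by simp)

lemma map_im_stdComplexGaussian : stdComplexGaussian.map Complex.im = gaussianReal 0 (1 / 2) := by
  rw [stdComplexGaussian, Measure.map_map Complex.measurable_im (MeasurableEquiv.measurable _)]
  exact (Measure.map_snd_prod).trans (by simp)

variable {g : ℝ → ℝ}

lemma integrable_comp_re_stdComplexGaussian (hg : Integrable g (gaussianReal 0 (1 / 2))) :
    Integrable (fun z => g z.re) stdComplexGaussian := by
  rw [← map_re_stdComplexGaussian] at hg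
  exact hg.comp_measurable Complex.measurable_re

lemma integrable_comp_im_stdComplexGaussian (hg : Integrable g (gaussianReal 0 (1 / 2))) :
    Integrable (fun z => g z.im) stdComplexGaussian := by
  rw [← map_im_stdComplexGaussian] at hg
  exact hg.comp_measurable Complex.measurable_im

lemma integral_comp_re_stdComplexGaussian (hg : Measurable g) :
    ∫ z, g z.re ∂stdComplexGaussian = ∫ x, g x ∂gaussianReal 0 (1 / 2) := by
  rw [← map_re_stdComplexGaussian, integral_map Complex.measurable_re.aemeasurable
    hg.aestronglyMeasurable]

lemma integral_comp_im_stdComplexGaussian (hg : Measurable g) :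
    ∫ z, g z.im ∂stdComplexGaussian = ∫ x, g x ∂gaussianReal 0 (1 / 2) := by
  rw [← map_im_stdComplexGaussian, integral_map Complex.measurable_im.aemeasurable
    hg.aestronglyMeasurable]

lemma integrable_id_stdComplexGaussian : Integrable (fun z : ℂ => z) stdComplexGaussian :=
  Integrable.re_im_iff.1
    ⟨integrable_comp_re_stdComplexGaussian ((memLp_id_gaussianReal 1).integrable le_rfl),
      integrable_comp_im_stdComplexGaussian ((memLp_id_gaussianReal 1).integrable le_rfl)⟩

lemma integrable_sq_gaussianReal (μ : ℝ) (v : NNReal) :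
    Integrable (fun x => x ^ 2) (gaussianReal μ v) :=
  (memLp_id_gaussianReal 2).integrable_sq

lemma integrable_sq_norm_stdComplexGaussian :
    Integrable (fun z : ℂ => ‖z‖ ^ 2) stdComplexGaussian := by
  simp_rw [Complex.sq_norm, Complex.normSq_apply, ← sq]
  exact (integrable_comp_re_stdComplexGaussian (integrable_sq_gaussianReal _ _)).add
    (integrable_comp_im_stdComplexGaussian (integrable_sq_gaussianReal _ _))

lemma integral_id_stdComplexGaussian : ∫ z, z ∂stdComplexGaussian = 0 := by
  rw [← integral_re_add_im integrable_id_stdComplexGaussian]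
  simp [integral_comp_re_stdComplexGaussian (g := fun x => x) measurable_id,
    integral_comp_im_stdComplexGaussian (g := fun x => x) measurable_id]

lemma integral_sq_norm_stdComplexGaussian : ∫ z, ‖z‖ ^ 2 ∂stdComplexGaussian = 1 := by
  simp_rw [Complex.sq_norm, Complex.normSq_apply, ← sq]
  rw [integral_add (integrable_comp_re_stdComplexGaussian (integrable_sq_gaussianReal _ _))
    (integrable_comp_im_stdComplexGaussian (integrable_sq_gaussianReal _ _)),
    integral_comp_re_stdComplexGaussian (g := fun x => x ^ 2) (measurable_id.pow_const 2),
    integral_comp_im_stdComplexGaussian (g := fun x => x ^ 2) (measurable_id.pow_const 2),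
    integral_sq_gaussianReal_zero]
  norm_num

lemma integrable_ite_mul_ite_conj_stdComplexGaussian (p q : Prop) [Decidable p] [Decidable q] :
    Integrable (fun z : ℂ => (if p then z else 1) * (if q then conj z else 1))
      stdComplexGaussian := by
  by_cases hp : p <;> by_cases hq : q <;> simp only [hp, hq, ↓reduceIte, mul_one, one_mul]
  · simp_rw [Complex.mul_conj', ← Complex.ofReal_pow]
    exact integrable_sq_norm_stdComplexGaussian.ofReal
  · exact integrable_id_stdComplexGaussian
  · exact Complex.conjCLE.toContinuousLinearMap.integrable_comp integrable_id_stdComplexGaussian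
  · exact integrable_const 1

lemma integral_ite_mul_ite_conj_stdComplexGaussian (p q : Prop) [Decidable p] [Decidable q] :
    ∫ z, (if p then z else 1) * (if q then conj z else 1) ∂stdComplexGaussian =
      if p ↔ q then 1 else 0 := by
  by_cases hp : p <;> by_cases hq : q <;> simp only [hp, hq, ↓reduceIte, iff_self, iff_true,
    iff_false, not_true_eq_false, mul_one, one_mul]
  · simp_rw [Complex.mul_conj', ← Complex.ofReal_pow]
    rw [integral_complex_ofReal, integral_sq_norm_stdComplexGaussian, Complex.ofReal_one]
  · exact integral_id_stdComplexGaussian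
  · rw [integral_conj, integral_id_stdComplexGaussian, map_zero]
  · simp

end ComplexGaussian

section Monomials

variable {ι κ : Type*} [Fintype ι] [Fintype κ]

lemma integral_pi_pi_prod {𝕜 E : Type*} [RCLike 𝕜] [MeasurableSpace E] (μ : Measure E)
    [SigmaFinite μ] (f : κ → ι → E → 𝕜) :
    ∫ X : κ → ι → E, ∏ r, ∏ i, f r i (X r i) ∂(Measure.pi fun _ => Measure.pi fun _ => μ) =
      ∏ r, ∏ i, ∫ z, f r i z ∂μ := by
  rw [integral_fintype_prod_eq_prod (fun r (x : ι → E) => ∏ i, f r i (x i))]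
  exact Finset.prod_congr rfl fun r _ => integral_fintype_prod_eq_prod (f r)

lemma prod_mul_conj_eq_prod_prod [DecidableEq κ] (X : κ → ι → ℂ) (R S : ι → κ) :
    ∏ i, X (R i) i * conj (X (S i) i) =
      ∏ r, ∏ i, (if R i = r then X r i else 1) * (if S i = r then conj (X r i) else 1) := by
  rw [Finset.prod_comm]
  refine Finset.prod_congr rfl fun i _ => ?_
  rw [Finset.prod_mul_distrib, Finset.prod_ite_eq, Finset.prod_ite_eq]
  simp

lemma integrable_prod_mul_conj (R S : ι → κ) :
    Integrable (fun X : κ → ι → ℂ => ∏ i, X (R i) i * conj (X (S i) i))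
      (Measure.pi fun _ => Measure.pi fun _ => stdComplexGaussian) := by
  classical
  simp_rw [prod_mul_conj_eq_prod_prod]
  exact Integrable.fintype_prod fun r =>
    Integrable.fintype_prod fun i => integrable_ite_mul_ite_conj_stdComplexGaussian _ _

lemma integral_prod_mul_conj [DecidableEq κ] (R S : ι → κ) :
    ∫ X : κ → ι → ℂ, ∏ i, X (R i) i * conj (X (S i) i)
      ∂(Measure.pi fun _ => Measure.pi fun _ => stdComplexGaussian) =
      if R = S then 1 else 0 := by
  simp_rw [prod_mul_conj_eq_prod_prod]
  rw [integral_pi_pi_prod _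
    fun r i z => (if R i = r then z else 1) * (if S i = r then conj z else 1)]
  simp_rw [integral_ite_mul_ite_conj_stdComplexGaussian]
  split_ifs with hRS
  · subst hRS
    simp
  · obtain ⟨i, hi⟩ := Function.ne_iff.1 hRS
    exact Finset.prod_eq_zero (Finset.mem_univ (R i))
      (Finset.prod_eq_zero (Finset.mem_univ i) (by simp [Ne.symm hi]))

theorem integral_sq_norm_sum_prod {S : Type*} [Fintype S] [DecidableEq κ] (R : S → ι → κ) :
    ∫ X : κ → ι → ℂ, ‖∑ s, ∏ i, X (R s i) i‖ ^ 2
      ∂(Measure.pi fun _ => Measure.pi fun _ => stdComplexGaussian) =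
      #{st : S × S | R st.1 = R st.2} := by
  have hexpand : ∀ X : κ → ι → ℂ, (‖∑ s, ∏ i, X (R s i) i‖ ^ 2 : ℝ) =
      RCLike.re (∑ s, ∑ t, ∏ i, X (R s i) i * conj (X (R t i) i)) := by
    intro X
    rw [RCLike.re_to_complex, Complex.sq_norm, ← Complex.ofReal_re (Complex.normSq _),
      ← Complex.mul_conj, map_sum, Finset.sum_mul_sum]
    simp_rw [map_prod, ← Finset.prod_mul_distrib]
  have hint : ∀ s t, Integrable (fun X : κ → ι → ℂ => ∏ i, X (R s i) i * conj (X (R t i) i))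
      (Measure.pi fun _ => Measure.pi fun _ => stdComplexGaussian) :=
    fun s t => integrable_prod_mul_conj _ _
  simp_rw [hexpand]
  rw [integral_re (integrable_finsetSum _ fun s _ => integrable_finsetSum _ fun t _ => hint s t),
    integral_finsetSum _ fun s _ => integrable_finsetSum _ fun t _ => hint s t]
  simp_rw [integral_finsetSum _ fun t _ => hint _ t, integral_prod_mul_conj]
  rw [Finset.card_filter, Fintype.sum_prod_type]
  push_cast
  simp

end Monomials

section PermCount

variable {α κ : Type*} [Fintype α] [DecidableEq α] [Fintype κ] [DecidableEq κ]

theorem card_perm_comp_eq (c d : α → κ) :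
    #{π : Perm α | c ∘ π = d} =
      if ∀ v, #{x | d x = v} = #{x | c x = v} then ∏ v, (#{x | c x = v})! else 0 := by
  split_ifs with h
  · have hfib : ∀ v, Fintype.card {x // d x = v} = Fintype.card {x // c x = v} := by
      simpa only [Fintype.card_subtype] using h
    set e := Equiv.ofFiberEquiv fun v => Fintype.equivOfCardEq (hfib v)
    have he : c ∘ e = d := funext (Equiv.ofFiberEquiv_map _)
    simp_rw [← Fintype.card_subtype, ← DomMulAct.stabilizer_card c, Fintype.card_subtype]
    refine card_equiv (Equiv.mulRight e⁻¹) fun π => ?_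
    simp only [mem_filter_univ, coe_mulRight, ← he]
    constructor
    · intro hπ
      ext x
      simpa using congrFun hπ (e.symm x)
    · intro hπ
      ext x
      simpa using congrFun hπ (e x)
  · rw [Finset.card_eq_zero, filter_eq_empty_iff]
    rintro π - rfl
    exact h fun v => card_equiv π fun x => by simp

theorem card_fiber_eq_mul_prod_factorial (f : α → κ) :
    #{g : α → κ | ∀ v, #{x | g x = v} = #{x | f x = v}} * ∏ v, (#{x | f x = v})! =
      (Fintype.card α)! := by
  calc _ = ∑ g : α → κ, #{π : Perm α | f ∘ ⇑π = g} := by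
        simp_rw [card_perm_comp_eq]
        rw [sum_ite, sum_const_zero, add_zero, sum_const, smul_eq_mul]
    _ = #(univ : Finset (Perm α)) :=
        (card_eq_sum_card_fiberwise fun (π : Perm α) _ => mem_univ (f ∘ ⇑π)).symm
    _ = (Fintype.card α)! := by rw [Finset.card_univ, Fintype.card_perm]

end PermCount

section DoubleFactorial

-- At `m = 0` the truncated subtraction gives `0‼ = 1`, the usual value of `(-1)‼`.
lemma factorial_two_mul_eq_doubleFactorial (m : ℕ) : (2 * m)! = 2 ^ m * m ! * (2 * m - 1)‼ := by
  cases m with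
  | zero => rfl
  | succ m =>
    rw [show 2 * (m + 1) = 2 * m + 1 + 1 by ring, factorial_eq_mul_doubleFactorial,
      show 2 * m + 1 + 1 = 2 * (m + 1) by ring, doubleFactorial_two_mul]
    rfl

lemma doubleFactorial_two_mul_add_ite_sub_one (m : ℕ) (p : Prop) [Decidable p] :
    (2 * (m + if p then 1 else 0) - 1)‼ = (2 * m + 1) ^ (if p then 1 else 0) * (2 * m - 1)‼ := by
  split_ifs
  · rw [show 2 * (m + 1) - 1 = 2 * m + 1 by omega, doubleFactorial_add_one, pow_one]
  · simp

lemma card_fiber_cons {κ : Type*} [DecidableEq κ] {n : ℕ} (x : κ) (g : Fin n → κ) (v : κ) :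
    #{j | (Fin.cons x g : Fin (n + 1) → κ) j = v} = #{j | g j = v} + if x = v then 1 else 0 := by
  simp_rw [card_filter, Fin.sum_univ_succ, Fin.cons_zero, Fin.cons_succ]
  rw [add_comm]

theorem sum_prod_doubleFactorial_card_fiber {κ : Type*} [Fintype κ] [DecidableEq κ] (n : ℕ) :
    ∑ f : Fin n → κ, ∏ v, (2 * #{j | f j = v} - 1)‼ =
      ∏ j ∈ range n, (Fintype.card κ + 2 * j) := by
  induction n with
  | zero => simp
  | succ n ih =>
    rw [← (Fin.consEquiv fun _ => κ).sum_comp, Fintype.sum_prod_type, Finset.sum_comm,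
      prod_range_succ, ← ih, sum_mul]
    refine sum_congr rfl fun g _ => ?_
    simp_rw [Fin.consEquiv_apply, card_fiber_cons, doubleFactorial_two_mul_add_ite_sub_one,
      prod_mul_distrib, prod_pow_boole, mem_univ, if_true, ← sum_mul]
    rw [mul_comm]
    congr 1
    rw [sum_add_distrib, ← mul_sum, sum_card_fiberwise_eq_card_filter]
    simp [add_comm]

end DoubleFactorial

section Count

variable {n : ℕ} {κ : Type*} [DecidableEq κ]

lemma card_monomialRow_fiber (s : Perm (Fin (2 * n)) × (Fin n → κ)) (v : κ) :
    #{a | monomialRow s a = v} = 2 * #{j | s.2 j = v} := by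
  rw [← card_pairIdx_fiber]
  exact card_equiv s.1.symm fun a => by
    simp only [mem_filter_univ]
    simp [monomialRow, Perm.inv_def]

variable [Fintype κ]

lemma card_perm_monomialRow_eq (s : Perm (Fin (2 * n)) × (Fin n → κ)) (g : Fin n → κ) :
    #{τ : Perm (Fin (2 * n)) | monomialRow s = monomialRow (τ, g)} =
      if ∀ v, #{j | g j = v} = #{j | s.2 j = v} then ∏ v, (2 * #{j | s.2 j = v})! else 0 := by
  rw [card_equiv (Equiv.inv _)
      (t := {τ : Perm (Fin (2 * n)) | (g ∘ pairIdx n) ∘ ⇑τ = monomialRow s})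
      fun τ => by simp only [mem_filter_univ]; exact eq_comm,
    card_perm_comp_eq]
  simp only [card_monomialRow_fiber, Function.comp_apply, card_pairIdx_fiber]
  have hcond : (∀ v, 2 * #{j | s.2 j = v} = 2 * #{j | g j = v}) ↔
      ∀ v, #{j | g j = v} = #{j | s.2 j = v} := by
    simp only [Nat.mul_left_cancel_iff two_pos, eq_comm]
  exact ite_congr (propext hcond) (fun h => by simp_rw [h]) fun _ => rfl

theorem card_monomialRow_eq (s : Perm (Fin (2 * n)) × (Fin n → κ)) :
    #{t | monomialRow s = monomialRow t} = 2 ^ n * n ! * ∏ v, (2 * #{j | s.2 j = v} - 1)‼ := by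
  have hsplit : #{t | monomialRow s = monomialRow t} =
      ∑ g, #{τ : Perm (Fin (2 * n)) | monomialRow s = monomialRow (τ, g)} := by
    simp_rw [card_filter]
    rw [Fintype.sum_prod_type, sum_comm]
  have hsum : ∑ v, #{j | s.2 j = v} = n := by
    simp [sum_card_fiberwise_eq_card_filter]
  simp_rw [hsplit, card_perm_monomialRow_eq, factorial_two_mul_eq_doubleFactorial, prod_mul_distrib,
    prod_pow_eq_pow_sum, hsum]
  have hfact := card_fiber_eq_mul_prod_factorial s.2
  rw [Fintype.card_fin] at hfact
  rw [sum_ite, sum_const_zero, add_zero, sum_const, smul_eq_mul, ← hfact]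
  ring

theorem card_pairs_monomialRow_eq :
    #{st : (Perm (Fin (2 * n)) × (Fin n → κ)) × (Perm (Fin (2 * n)) × (Fin n → κ)) |
        monomialRow st.1 = monomialRow st.2} =
      (2 * n)! * 2 ^ n * n ! * ∏ j ∈ range n, (Fintype.card κ + 2 * j) := by
  rw [card_filter, Fintype.sum_prod_type]
  simp_rw [← card_filter, card_monomialRow_eq]
  rw [Fintype.sum_prod_type]
  simp only [← mul_sum, sum_prod_doubleFactorial_card_fiber, sum_const, Finset.card_univ,
    Fintype.card_perm, Fintype.card_fin, smul_eq_mul]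
  ring

end Count

theorem expectation_sq_hafnian_general (n k : ℕ) :
    (∫ X, ‖hafnian n ((Matrix.of X)ᵀ * Matrix.of X)‖ ^ 2 ∂gaussianMatrix k n) =
      ((2 * n).factorial / (2 ^ n * n.factorial) : ℝ) *
        ∏ j ∈ Finset.range n, ((k : ℝ) + 2 * j) := by
  have hnorm : ∀ X : Fin k → Fin (2 * n) → ℂ,
      ‖hafnian n ((Matrix.of X)ᵀ * Matrix.of X)‖ ^ 2 =
        (1 / (2 ^ n * n.factorial : ℝ)) ^ 2 * ‖∑ s, ∏ a, X (monomialRow s a) a‖ ^ 2 := by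
    intro X
    simp [hafnian_transpose_mul_self, mul_pow]
  simp_rw [hnorm]
  rw [integral_const_mul, gaussianMatrix, integral_sq_norm_sum_prod,
    card_pairs_monomialRow_eq, Fintype.card_fin]
  push_cast
  field_simp

/-- For `n, k ≥ 1` and `X` a `k × 2n` matrix of i.i.d. standard complex
Gaussians, `E[|Haf(XᵀX)|²] = ((2n)!/(2^n n!)) · ∏_{j=0}^{n−1} (k + 2j)`. -/
theorem expectation_sq_hafnian (n k : ℕ) (hn : 1 ≤ n) (hk : 1 ≤ k) :
    (∫ X, ‖hafnian n ((Matrix.of X)ᵀ * Matrix.of X)‖ ^ 2 ∂gaussianMatrix k n) =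
      ((2 * n).factorial / (2 ^ n * n.factorial) : ℝ) *
        ∏ j ∈ Finset.range n, ((k : ℝ) + 2 * j) :=
  expectation_sq_hafnian_general n k

end GBS
end

section
/- For natural numbers k and n ≥ 2, define f(k,n) = ∑_{M} k^{C(G_M)}, the sum over all perfect matchings M of {1,…,2n} of k raised to the number of connected components of G_M. Then f(k,n) = (k + 2n − 2) · f(k, n−1). -/
open scoped BigOperators

namespace GBS

/-- `f(k,n) = ∑_M k^{C(G_M)}`, summing over all perfect matchings of `{1,…,2n}`. -/
noncomputable def matchSum (k n : ℕ) : ℕ :=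
  ∑ f : PerfectMatching n, k ^ Nat.card (matchGraph n f.1).ConnectedComponent

end GBS

/-!
Let `newA, newB` be the last black pair. In a matching on `2(m + 1)` points, either `newB` is
matched to `newA`, and removing the pair leaves a matching on `2m` points with one component
fewer; or `newB` and `newA` are matched to old vertices `x` and `y`, and contracting the path
`x – newB – newA – y` to a red edge `{x, y}` leaves a matching on `2m` points with the same
components. Each matching `g` on `2m` points arises once in the first way and, choosing
`x` among the `2m` old vertices, `2m` times in the second, so `f(k, m + 1) = (k + 2m) f(k, m)`.
-/

theorem Equiv.Perm.exists_semiconj_of_injective {α β : Type*} {ι : α → β}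
    (hι : Function.Injective ι) (f : Equiv.Perm β)
    (hf : ∀ b, f b ∈ Set.range ι ↔ b ∈ Set.range ι) :
    ∃ g : Equiv.Perm α, Function.Semiconj ι g f :=
  ⟨(Equiv.ofInjective ι hι).symm.permCongr (f.subtypePerm hf), fun a => by
    simp [Equiv.permCongr_apply, Equiv.apply_ofInjective_symm]⟩

namespace SimpleGraph

variable {V W T : Type*} {G : SimpleGraph V} {H : SimpleGraph W}

theorem Reachable.map_of_adj_reachable (f : V → W)
    (hf : ∀ ⦃u v⦄, G.Adj u v → H.Reachable (f u) (f v)) {u v : V} (h : G.Reachable u v) :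
    H.Reachable (f u) (f v) := by
  obtain ⟨p⟩ := h
  induction p with
  | nil => rfl
  | cons hadj _ ih => exact (hf hadj).trans ih

theorem card_connectedComponent_eq_of_surjective (F : V → T) (hF : Function.Surjective F)
    (hadj : ∀ ⦃u v⦄, G.Adj u v → F u = F v) (hreach : ∀ ⦃u v⦄, F u = F v → G.Reachable u v) :
    Nat.card G.ConnectedComponent = Nat.card T := by
  have hconst {u v : V} (h : G.Reachable u v) : F u = F v :=
    reachable_bot.mp (h.map_of_adj_reachable (H := ⊥) F fun _ _ huv => reachable_bot.mpr (hadj huv))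
  refine Nat.card_congr (.ofBijective (ConnectedComponent.lift F fun _ _ p _ => hconst p.reachable)
    ⟨?_, fun t => ?_⟩)
  · rintro ⟨u⟩ ⟨v⟩ h
    exact ConnectedComponent.sound (hreach h)
  · obtain ⟨v, rfl⟩ := hF t
    exact ⟨G.connectedComponentMk v, rfl⟩

end SimpleGraph

namespace GBS

open SimpleGraph

variable {m n : ℕ}

theorem matchGraph_adj_apply (f : PerfectMatching n) (u : Fin (2 * n)) :
    (matchGraph n f.1).Adj u (f.1 u) :=
  ⟨(f.2.2 u).symm, Or.inr (Or.inl rfl)⟩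

theorem matchGraph_adj_of_div_two_eq {f : Equiv.Perm (Fin (2 * n))} {u v : Fin (2 * n)}
    (hne : u ≠ v) (h : (u : ℕ) / 2 = (v : ℕ) / 2) : (matchGraph n f).Adj u v :=
  ⟨hne, Or.inl h⟩

@[elab_as_elim]
theorem matchGraph_adj_induction (f : PerfectMatching n) {R : Fin (2 * n) → Fin (2 * n) → Prop}
    (hR : ∀ ⦃u v⦄, R u v → R v u)
    (black : ∀ u v : Fin (2 * n), u ≠ v → (u : ℕ) / 2 = (v : ℕ) / 2 → R u v)
    (red : ∀ u, R u (f.1 u)) {u v : Fin (2 * n)} (h : (matchGraph n f.1).Adj u v) : R u v := by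
  obtain ⟨hne, hb | rfl | rfl⟩ := h
  exacts [black u v hne hb, red u, hR (red v)]

namespace PerfectMatching

def conj (σ : Equiv.Perm (Fin (2 * n))) (f : PerfectMatching n) : PerfectMatching n :=
  ⟨σ * f.1 * σ⁻¹, fun x => by simp [f.2.1], fun x => by
    simpa [← Equiv.eq_symm_apply] using f.2.2 (σ⁻¹ x)⟩

@[simp] theorem conj_apply (σ : Equiv.Perm (Fin (2 * n))) (f : PerfectMatching n)
    (x : Fin (2 * n)) : (f.conj σ).1 x = σ (f.1 (σ⁻¹ x)) := rfl

theorem conj_conj (σ τ : Equiv.Perm (Fin (2 * n))) (f : PerfectMatching n) :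
    (f.conj σ).conj τ = f.conj (τ * σ) :=
  Subtype.ext (by simp only [conj, mul_inv_rev, mul_assoc])

theorem conj_one (f : PerfectMatching n) : f.conj 1 = f :=
  Subtype.ext (by simp [conj])

theorem conj_injective (σ : Equiv.Perm (Fin (2 * n))) : Function.Injective (conj σ) :=
  fun f f' h => by simpa [conj_conj, conj_one] using congrArg (conj σ⁻¹) h

end PerfectMatching

def vertexEquiv : Fin (2 * m) ⊕ Fin 2 ≃ Fin (2 * (m + 1)) :=
  finSumFinEquiv.trans (finCongr (by ring))

def oldV (w : Fin (2 * m)) : Fin (2 * (m + 1)) := vertexEquiv (.inl w)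

def newA : Fin (2 * (m + 1)) := vertexEquiv (.inr 0)

def newB : Fin (2 * (m + 1)) := vertexEquiv (.inr 1)

def toOldV (z : Fin (2 * (m + 1))) : Option (Fin (2 * m)) := (vertexEquiv.symm z).getLeft?

theorem val_vertexEquiv_inr (i : Fin 2) : (vertexEquiv (m := m) (.inr i) : ℕ) = 2 * m + i := by
  simp only [vertexEquiv, Equiv.trans_apply, finCongr_apply, Fin.val_cast,
    finSumFinEquiv_apply_right, Fin.val_natAdd]

@[simp] theorem val_oldV (w : Fin (2 * m)) : (oldV w : ℕ) = w := by
  simp only [oldV, vertexEquiv, Equiv.trans_apply, finCongr_apply, Fin.val_cast,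
    finSumFinEquiv_apply_left, Fin.val_castAdd]

@[simp] theorem val_newA : ((newA : Fin (2 * (m + 1))) : ℕ) = 2 * m := val_vertexEquiv_inr 0

@[simp] theorem val_newB : ((newB : Fin (2 * (m + 1))) : ℕ) = 2 * m + 1 := val_vertexEquiv_inr 1

@[simp] theorem toOldV_oldV (w : Fin (2 * m)) : toOldV (oldV w) = some w := by
  simp [toOldV, oldV]

@[simp] theorem toOldV_newA : toOldV (newA : Fin (2 * (m + 1))) = none := by simp [toOldV, newA]

@[simp] theorem toOldV_newB : toOldV (newB : Fin (2 * (m + 1))) = none := by simp [toOldV, newB]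

theorem oldV_injective : Function.Injective (oldV : Fin (2 * m) → Fin (2 * (m + 1))) :=
  vertexEquiv.injective.comp Sum.inl_injective

@[simp] theorem oldV_ne_newA (w : Fin (2 * m)) : oldV w ≠ newA :=
  vertexEquiv.injective.ne Sum.inl_ne_inr

@[simp] theorem oldV_ne_newB (w : Fin (2 * m)) : oldV w ≠ newB :=
  vertexEquiv.injective.ne Sum.inl_ne_inr

@[simp] theorem newA_ne_newB : (newA : Fin (2 * (m + 1))) ≠ newB :=
  vertexEquiv.injective.ne (by simp)

theorem vertex_cases (z : Fin (2 * (m + 1))) : (∃ w, z = oldV w) ∨ z = newA ∨ z = newB := by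
  obtain ⟨w | i, rfl⟩ := vertexEquiv.surjective z
  · exact .inl ⟨w, rfl⟩
  · fin_cases i
    exacts [.inr (.inl rfl), .inr (.inr rfl)]

theorem apply_toOldV_eq_of_div_two_eq {T : Type*} {g : Equiv.Perm (Fin (2 * m))}
    (Φ : Option (Fin (2 * m)) → T)
    (hΦ : ∀ ⦃w w'⦄, (matchGraph m g).Adj w w' → Φ (some w) = Φ (some w'))
    {u v : Fin (2 * (m + 1))} (hne : u ≠ v) (h : (u : ℕ) / 2 = (v : ℕ) / 2) :
    Φ (toOldV u) = Φ (toOldV v) := by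
  rcases vertex_cases u with ⟨w, rfl⟩ | rfl | rfl <;>
    rcases vertex_cases v with ⟨w', rfl⟩ | rfl | rfl <;>
    simp [oldV_injective.eq_iff] at h hne ⊢
  all_goals first | exact hΦ ⟨hne, Or.inl h⟩ | omega

theorem matchGraph_adj_newA_newB (f : Equiv.Perm (Fin (2 * (m + 1)))) :
    (matchGraph (m + 1) f).Adj newA newB :=
  matchGraph_adj_of_div_two_eq newA_ne_newB (by simp; omega)

theorem mem_range_oldV_iff (z : Fin (2 * (m + 1))) :
    z ∈ Set.range oldV ↔ z ≠ newA ∧ z ≠ newB := by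
  rcases vertex_cases z with ⟨w, rfl⟩ | rfl | rfl <;> simp

namespace PerfectMatching

def extend (g : PerfectMatching m) : PerfectMatching (m + 1) :=
  ⟨vertexEquiv.permCongr (g.1.sumCongr (Equiv.swap 0 1)),
    fun z => by
      obtain ⟨w | i, rfl⟩ := vertexEquiv.surjective z <;> simp [Equiv.permCongr_apply, g.2.1],
    fun z => by
      obtain ⟨w | i, rfl⟩ := vertexEquiv.surjective z
      · simpa [Equiv.permCongr_apply] using g.2.2 w
      · fin_cases i <;> simp [Equiv.permCongr_apply]⟩

@[simp] theorem extend_oldV (g : PerfectMatching m) (w : Fin (2 * m)) :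
    g.extend.1 (oldV w) = oldV (g.1 w) := by
  simp [extend, oldV, Equiv.permCongr_apply]

@[simp] theorem extend_newA (g : PerfectMatching m) : g.extend.1 newA = newB := by
  simp [extend, newA, newB, Equiv.permCongr_apply]

@[simp] theorem extend_newB (g : PerfectMatching m) : g.extend.1 newB = newA := by
  simp [extend, newA, newB, Equiv.permCongr_apply]

theorem extend_injective : Function.Injective (extend (m := m)) := fun _ _ h =>
  Subtype.ext <| Equiv.ext fun w => oldV_injective <| by
    rw [← extend_oldV, ← extend_oldV, h]

theorem exists_extend_eq (f : PerfectMatching (m + 1)) (h : f.1 newB = newA) :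
    ∃ g : PerfectMatching m, g.extend = f := by
  have hA : f.1 newA = newB := by rw [← h, f.2.1]
  have hfA (z) : f.1 z = newA ↔ z = newB := by rw [← h, Equiv.apply_eq_iff_eq]
  have hfB (z) : f.1 z = newB ↔ z = newA := by rw [← hA, Equiv.apply_eq_iff_eq]
  have hf (z) : f.1 z ∈ Set.range oldV ↔ z ∈ Set.range oldV := by
    simp only [mem_range_oldV_iff, ne_eq, hfA, hfB]
    tauto
  obtain ⟨g, hg⟩ := Equiv.Perm.exists_semiconj_of_injective oldV_injective f.1 hf
  have hg2 : ∀ w, g (g w) = w := fun w => oldV_injective (by rw [hg, hg, f.2.1])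
  refine ⟨⟨g, hg2, fun w hw => f.2.2 (oldV w) (by rw [← hg, hw])⟩,
    Subtype.ext (Equiv.ext fun z => ?_)⟩
  rcases vertex_cases z with ⟨w, rfl⟩ | rfl | rfl
  · exact (extend_oldV _ w).trans (hg w)
  · rw [extend_newA, hA]
  · rw [extend_newB, h]

/-- Conjugating by the transposition of `oldV x` and `newA` replaces the red pairs `{x, g x}`
and `{newA, newB}` by `{newB, x}` and `{newA, g x}`. -/
def splice (g : PerfectMatching m) (x : Fin (2 * m)) : PerfectMatching (m + 1) :=
  g.extend.conj (Equiv.swap (oldV x) newA)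

@[simp] theorem splice_newA (g : PerfectMatching m) (x : Fin (2 * m)) :
    (g.splice x).1 newA = oldV (g.1 x) := by
  have : oldV (g.1 x) ≠ oldV x := oldV_injective.ne (g.2.2 x)
  simp [splice, Equiv.swap_apply_of_ne_of_ne this]

@[simp] theorem splice_newB (g : PerfectMatching m) (x : Fin (2 * m)) :
    (g.splice x).1 newB = oldV x := by
  simp [splice, Equiv.swap_apply_of_ne_of_ne (oldV_ne_newB x).symm newA_ne_newB.symm]

theorem splice_oldV (g : PerfectMatching m) {x w : Fin (2 * m)} (hx : w ≠ x) (hgx : w ≠ g.1 x) :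
    (g.splice x).1 (oldV w) = oldV (g.1 w) := by
  have hgw : g.1 w ≠ x := fun h => hgx (by rw [← h, g.2.1])
  simp [splice, Equiv.swap_apply_of_ne_of_ne, oldV_injective.ne hx, oldV_injective.ne hgw]

theorem splice_oldV_self (g : PerfectMatching m) (x : Fin (2 * m)) :
    (g.splice x).1 (oldV x) = newB := by
  rw [← splice_newB g x, (g.splice x).2.1]

theorem splice_oldV_apply_self (g : PerfectMatching m) (x : Fin (2 * m)) :
    (g.splice x).1 (oldV (g.1 x)) = newA := by
  rw [← splice_newA g x, (g.splice x).2.1]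

theorem splice_left_injective (x : Fin (2 * m)) :
    Function.Injective fun g : PerfectMatching m => g.splice x :=
  fun _ _ h => extend_injective (conj_injective _ h)

theorem exists_splice_eq (f : PerfectMatching (m + 1)) (h : f.1 newB ≠ newA) :
    ∃ x, ∃ g : PerfectMatching m, g.splice x = f := by
  obtain ⟨x, hx⟩ : ∃ x, f.1 newB = oldV x :=
    (vertex_cases _).resolve_right (by simp [h, f.2.2])
  obtain ⟨g, hg⟩ := exists_extend_eq (f.conj (Equiv.swap (oldV x) newA)) (by
    simp [Equiv.swap_apply_of_ne_of_ne (oldV_ne_newB x).symm newA_ne_newB.symm, hx])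
  exact ⟨x, g, by rw [splice, hg, conj_conj, Equiv.swap_mul_self, conj_one]⟩

end PerfectMatching

open PerfectMatching

def extendOrSplice : PerfectMatching m ⊕ Fin (2 * m) × PerfectMatching m →
    PerfectMatching (m + 1) :=
  Sum.elim extend fun p => p.2.splice p.1

theorem extendOrSplice_bijective : Function.Bijective (extendOrSplice (m := m)) := by
  refine ⟨?_, fun f => ?_⟩
  · rintro (g | ⟨x, g⟩) (g' | ⟨x', g'⟩) h <;>
      have hB := congrArg (fun f : PerfectMatching (m + 1) => f.1 newB) h <;>
      simp only [extendOrSplice, Sum.elim_inl, Sum.elim_inr, extend_newB, splice_newB] at h hB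
    · exact congrArg Sum.inl (extend_injective h)
    · exact absurd hB.symm (oldV_ne_newA x')
    · exact absurd hB (oldV_ne_newA x)
    · obtain rfl := oldV_injective hB
      exact congrArg (Sum.inr ∘ Prod.mk x) (splice_left_injective x h)
  · by_cases h : f.1 newB = newA
    · obtain ⟨g, rfl⟩ := f.exists_extend_eq h
      exact ⟨.inl g, rfl⟩
    · obtain ⟨x, g, rfl⟩ := f.exists_splice_eq h
      exact ⟨.inr (x, g), rfl⟩

theorem reachable_oldV_of_reachable {g : PerfectMatching m} {f : Equiv.Perm (Fin (2 * (m + 1)))}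
    (hred : ∀ w, (matchGraph (m + 1) f).Reachable (oldV w) (oldV (g.1 w)))
    {w w' : Fin (2 * m)} (h : (matchGraph m g.1).Reachable w w') :
    (matchGraph (m + 1) f).Reachable (oldV w) (oldV w') :=
  h.map_of_adj_reachable oldV fun _ _ hadj =>
    matchGraph_adj_induction g (fun _ _ => Reachable.symm)
      (fun _ _ hne hb =>
        (matchGraph_adj_of_div_two_eq (oldV_injective.ne hne) (by simpa using hb)).reachable)
      hred hadj

theorem card_connectedComponent_extend (g : PerfectMatching m) :
    Nat.card (matchGraph (m + 1) g.extend.1).ConnectedComponent =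
      Nat.card (matchGraph m g.1).ConnectedComponent + 1 := by
  set G := matchGraph m g.1
  set G' := matchGraph (m + 1) g.extend.1
  have hred (w) : G'.Reachable (oldV w) (oldV (g.1 w)) := by
    simpa using (matchGraph_adj_apply g.extend (oldV w)).reachable
  rw [← Finite.card_option]
  refine card_connectedComponent_eq_of_surjective (fun z => (toOldV z).map G.connectedComponentMk)
    ?_ ?_ ?_
  · rintro (_ | c)
    · exact ⟨newA, by simp⟩
    · induction c using ConnectedComponent.ind with | _ w => exact ⟨oldV w, by simp⟩
  · refine fun u v huv => matchGraph_adj_induction g.extend (fun _ _ => Eq.symm)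
      (fun u v hne hb => apply_toOldV_eq_of_div_two_eq (g := g.1) _ (fun w w' hw => ?_) hne hb)
      (fun u => ?_) huv
    · simpa using ConnectedComponent.connectedComponentMk_eq_of_adj hw
    · rcases vertex_cases u with ⟨w, rfl⟩ | rfl | rfl
      · simpa using ConnectedComponent.connectedComponentMk_eq_of_adj (matchGraph_adj_apply g w)
      all_goals simp
  · intro u v huv
    have hAB : G'.Reachable newA newB := (matchGraph_adj_newA_newB _).reachable
    rcases vertex_cases u with ⟨w, rfl⟩ | rfl | rfl <;>
      rcases vertex_cases v with ⟨w', rfl⟩ | rfl | rfl <;> simp at huv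
    exacts [reachable_oldV_of_reachable hred huv, .rfl, hAB, hAB.symm, .rfl]

theorem matchGraph_splice_adj_newA (g : PerfectMatching m) (x : Fin (2 * m)) :
    (matchGraph (m + 1) (g.splice x).1).Adj newA (oldV (g.1 x)) := by
  simpa using matchGraph_adj_apply (g.splice x) newA

theorem matchGraph_splice_adj_newB (g : PerfectMatching m) (x : Fin (2 * m)) :
    (matchGraph (m + 1) (g.splice x).1).Adj newB (oldV x) := by
  simpa using matchGraph_adj_apply (g.splice x) newB

theorem matchGraph_splice_reachable_newB (g : PerfectMatching m) (x : Fin (2 * m)) :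
    (matchGraph (m + 1) (g.splice x).1).Reachable newB (oldV (g.1 x)) :=
  (matchGraph_adj_newA_newB _).symm.reachable.trans (matchGraph_splice_adj_newA g x).reachable

theorem matchGraph_splice_reachable_oldV_apply (g : PerfectMatching m) (x w : Fin (2 * m)) :
    (matchGraph (m + 1) (g.splice x).1).Reachable (oldV w) (oldV (g.1 w)) := by
  have hx : (matchGraph (m + 1) (g.splice x).1).Reachable (oldV x) (oldV (g.1 x)) :=
    (matchGraph_splice_adj_newB g x).symm.reachable.trans (matchGraph_splice_reachable_newB g x)
  by_cases hwx : w = x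
  · exact hwx ▸ hx
  by_cases hwgx : w = g.1 x
  · rw [hwgx, g.2.1]
    exact hx.symm
  simpa [splice_oldV g hwx hwgx] using (matchGraph_adj_apply (g.splice x) (oldV w)).reachable

theorem card_connectedComponent_splice (g : PerfectMatching m) (x : Fin (2 * m)) :
    Nat.card (matchGraph (m + 1) (g.splice x).1).ConnectedComponent =
      Nat.card (matchGraph m g.1).ConnectedComponent := by
  set G := matchGraph m g.1
  set G' := matchGraph (m + 1) (g.splice x).1
  have hrep (z) : G'.Reachable z (oldV ((toOldV z).getD (g.1 x))) := by
    rcases vertex_cases z with ⟨w, rfl⟩ | rfl | rfl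
    · simp
    · simpa using (matchGraph_splice_adj_newA g x).reachable
    · simpa using matchGraph_splice_reachable_newB g x
  refine card_connectedComponent_eq_of_surjective
    (fun z => G.connectedComponentMk ((toOldV z).getD (g.1 x))) (fun c => ?_) ?_
    fun u v huv => (hrep u).trans <| (reachable_oldV_of_reachable
      (matchGraph_splice_reachable_oldV_apply g x) (ConnectedComponent.exact huv)).trans (hrep v).symm
  · induction c using ConnectedComponent.ind with | _ w => exact ⟨oldV w, by simp⟩
  refine fun u v huv => matchGraph_adj_induction (g.splice x) (fun _ _ => Eq.symm)
    (fun u v hne hb => apply_toOldV_eq_of_div_two_eq (g := g.1)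
      (fun o => G.connectedComponentMk (o.getD (g.1 x))) (fun w w' hw => ?_) hne hb)
    (fun u => ?_) huv
  · exact ConnectedComponent.connectedComponentMk_eq_of_adj hw
  have hg (w) : G.connectedComponentMk w = G.connectedComponentMk (g.1 w) :=
    ConnectedComponent.connectedComponentMk_eq_of_adj (matchGraph_adj_apply g w)
  rcases vertex_cases u with ⟨w, rfl⟩ | rfl | rfl
  · by_cases hwx : w = x
    · subst hwx
      simpa [splice_oldV_self] using hg w
    by_cases hwgx : w = g.1 x
    · subst hwgx
      simp [splice_oldV_apply_self]
    · simpa [splice_oldV g hwx hwgx] using hg w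
  · simp
  · simpa using (hg x).symm

theorem matchSum_succ (k m : ℕ) : matchSum k (m + 1) = (k + 2 * m) * matchSum k m := by
  set c := fun g : PerfectMatching m => Nat.card (matchGraph m g.1).ConnectedComponent
  calc matchSum k (m + 1)
      = ∑ s, k ^ Nat.card (matchGraph (m + 1) (extendOrSplice s).1).ConnectedComponent :=
        (Fintype.sum_bijective _ extendOrSplice_bijective _ _ fun _ => rfl).symm
    _ = ∑ g, k ^ (c g + 1) + ∑ _x : Fin (2 * m), ∑ g, k ^ c g := by
        simp only [Fintype.sum_sum_type, Fintype.sum_prod_type, extendOrSplice, Sum.elim_inl,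
          Sum.elim_inr, card_connectedComponent_extend, card_connectedComponent_splice, c]
    _ = (k + 2 * m) * matchSum k m := by
        simp only [matchSum, pow_succ, ← Finset.sum_mul, Finset.sum_const, Finset.card_univ,
          Fintype.card_fin, smul_eq_mul, c]
        ring

/-- For `n ≥ 2`, `f(k,n) = (k + 2n - 2) · f(k, n-1)`. -/
theorem matchSum_recurrence (k n : ℕ) (hn : 2 ≤ n) :
    matchSum k n = (k + 2 * n - 2) * matchSum k (n - 1) := by
  obtain ⟨m, rfl⟩ : ∃ m, n = m + 1 := ⟨n - 1, by omega⟩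
  rw [matchSum_succ, Nat.add_sub_cancel, show k + 2 * (m + 1) - 2 = k + 2 * m by omega]

end GBS
end

section
/- Let n ≥ 1 and let X be a 1×2n random matrix (a row vector) whose entries are independent standard complex Gaussian random variables. Then E[ |Haf(XᵀX)|⁴ ] = ((2n−1)!!)⁴ · 4^n, where (2n−1)!! = (2n)!/(2^n n!). -/
/-!
Since `XᵀX = x xᵀ` has rank one, every one of the `(2n)!` terms of the hafnian equals `∏ xᵢ`, so
`Haf(XᵀX) = (2n-1)!! ∏ xᵢ`. By independence `E ∏ |xᵢ|⁴ = (E|Z|⁴)^{2n}`, and `E|Z|⁴ = Γ(3) = 2`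
because `Z` has density `e^{-|z|²}/π` on `ℂ`.
-/

open scoped BigOperators
open MeasureTheory ProbabilityTheory Matrix

namespace GBS

open Real

lemma gaussianPDFReal_zero_half (x : ℝ) : gaussianPDFReal 0 (1 / 2) x = (√π)⁻¹ * rexp (-x ^ 2) := by
  have : 2 * π * ((1 / 2 : NNReal) : ℝ) = π := by push_cast; ring
  rw [gaussianPDFReal, this]
  push_cast
  ring_nf

lemma gaussianReal_prod_eq_withDensity :
    (gaussianReal 0 (1 / 2)).prod (gaussianReal 0 (1 / 2)) =
      volume.withDensity fun p : ℝ × ℝ => ENNReal.ofReal (π⁻¹ * rexp (-(p.1 ^ 2 + p.2 ^ 2))) := by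
  rw [gaussianReal_of_var_ne_zero _ (by norm_num), prod_withDensity (by fun_prop) (by fun_prop),
    Measure.volume_eq_prod]
  congr 1
  ext p
  rw [gaussianPDF, gaussianPDF, gaussianPDFReal_zero_half, gaussianPDFReal_zero_half,
    ← ENNReal.ofReal_mul (by positivity), mul_mul_mul_comm, ← mul_inv,
    mul_self_sqrt pi_pos.le, ← exp_add, neg_add]

lemma integral_stdComplexGaussian {E : Type*} [NormedAddCommGroup E] [NormedSpace ℝ E]
    (f : ℂ → E) : ∫ z, f z ∂stdComplexGaussian = ∫ z, (π⁻¹ * rexp (-‖z‖ ^ 2)) • f z := by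
  rw [stdComplexGaussian, integral_map_equiv, gaussianReal_prod_eq_withDensity,
    integral_withDensity_eq_integral_toReal_smul (by fun_prop)
      (ae_of_all _ fun _ => ENNReal.ofReal_lt_top),
    ← (Complex.volume_preserving_equiv_real_prod.symm).integral_comp
      Complex.measurableEquivRealProd.symm.measurableEmbedding]
  congr 1
  ext p
  rw [ENNReal.toReal_ofReal (by positivity), Complex.sq_norm, Complex.normSq_apply]
  simp [Complex.measurableEquivRealProd, sq]

lemma integral_norm_rpow_stdComplexGaussian {q : ℝ} (hq : -2 < q) :
    ∫ z, ‖z‖ ^ q ∂stdComplexGaussian = Gamma (q / 2 + 1) := by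
  rw [integral_stdComplexGaussian]
  simp_rw [smul_eq_mul, mul_assoc, integral_const_mul, mul_comm (rexp _)]
  have hpolar := Complex.integral_rpow_mul_exp_neg_rpow (p := 2) (by norm_num) hq
  simp_rw [rpow_two] at hpolar
  rw [hpolar]
  field_simp

lemma integral_norm_pow_four_stdComplexGaussian : ∫ z, ‖z‖ ^ 4 ∂stdComplexGaussian = 2 := by
  have h := integral_norm_rpow_stdComplexGaussian (q := 4) (by norm_num)
  simp_rw [rpow_ofNat] at h
  rw [h, show (4 / 2 + 1 : ℝ) = (2 : ℕ) + 1 by norm_num, Gamma_nat_eq_factorial]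
  norm_num

lemma integral_prod_gaussianMatrix {𝕜 : Type*} [RCLike 𝕜] (k n : ℕ) (f : ℂ → 𝕜) :
    ∫ X, ∏ r, ∏ i, f (X r i) ∂gaussianMatrix k n =
      (∫ z, f z ∂stdComplexGaussian) ^ (k * (2 * n)) := by
  rw [gaussianMatrix, integral_fintype_prod_eq_pow (fun Y : Fin (2 * n) → ℂ => ∏ i, f (Y i)),
    integral_fintype_prod_eq_pow, Fintype.card_fin, Fintype.card_fin, ← pow_mul, mul_comm]

lemma prod_lo_mul_hi {M : Type*} [CommMonoid M] (n : ℕ) (g : Fin (2 * n) → M) :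
    ∏ j, g (lo n j) * g (hi n j) = ∏ i, g i := by
  let e : Fin n × Fin 2 ≃ Fin (2 * n) := finProdFinEquiv.trans (finCongr (mul_comm n 2))
  rw [← e.prod_comp, Fintype.prod_prod_type]
  refine Finset.prod_congr rfl fun j _ => ?_
  rw [Fin.prod_univ_two]
  congr 2 <;> ext <;> simp [e, lo, hi, add_comm]

lemma hafnian_vecMulVec (n : ℕ) (x : Fin (2 * n) → ℂ) :
    hafnian n (vecMulVec x x) = (2 * n).factorial / (2 ^ n * n.factorial) * ∏ i, x i := by
  have hterm (σ : Equiv.Perm (Fin (2 * n))) :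
      ∏ j, vecMulVec x x (σ (lo n j)) (σ (hi n j)) = ∏ i, x i := by
    simp only [vecMulVec_apply]
    exact (prod_lo_mul_hi n (x ∘ σ)).trans (Equiv.prod_comp σ x)
  simp only [hafnian, hterm, Finset.sum_const, Finset.card_univ, Fintype.card_perm,
    Fintype.card_fin, nsmul_eq_mul]
  ring

lemma transpose_mul_self_of_fin_one {m R : Type*} [NonUnitalNonAssocSemiring R]
    (X : Fin 1 → m → R) :
    (Matrix.of X)ᵀ * Matrix.of X = vecMulVec (X 0) (X 0) := by
  ext a b
  simp [Matrix.mul_apply, vecMulVec_apply]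

theorem expectation_fourth_hafnian_one_row_general (n : ℕ) :
    (∫ X, ‖hafnian n ((Matrix.of X)ᵀ * Matrix.of X)‖ ^ 4 ∂gaussianMatrix 1 n) =
      ((2 * n).factorial / (2 ^ n * n.factorial) : ℝ) ^ 4 * 4 ^ n := by
  have hnorm (X : Fin 1 → Fin (2 * n) → ℂ) :
      ‖hafnian n ((Matrix.of X)ᵀ * Matrix.of X)‖ ^ 4 =
        ((2 * n).factorial / (2 ^ n * n.factorial) : ℝ) ^ 4 * ∏ r, ∏ i, ‖X r i‖ ^ 4 := by
    rw [transpose_mul_self_of_fin_one, hafnian_vecMulVec, Fin.prod_univ_one, norm_mul, mul_pow,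
      norm_prod, Finset.prod_pow]
    simp
  simp_rw [hnorm]
  rw [integral_const_mul, integral_prod_gaussianMatrix 1 n (‖·‖ ^ 4),
    integral_norm_pow_four_stdComplexGaussian, one_mul, pow_mul]
  norm_num

/-- For `n ≥ 1` and `X` a `1 × 2n` row vector of i.i.d. standard complex
Gaussians, `E[|Haf(XᵀX)|⁴] = ((2n−1)!!)⁴ · 4^n`, where `(2n−1)!! = (2n)!/(2^n n!)`. -/
theorem expectation_fourth_hafnian_one_row (n : ℕ) (hn : 1 ≤ n) :
    (∫ X, ‖hafnian n ((Matrix.of X)ᵀ * Matrix.of X)‖ ^ 4 ∂gaussianMatrix 1 n) =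
      ((2 * n).factorial / (2 ^ n * n.factorial) : ℝ) ^ 4 * 4 ^ n :=
  expectation_fourth_hafnian_one_row_general n

end GBS
end

section
/- Let k ≥ 1 and n ≥ 0 be natural numbers. Then n! · ∑_{ℓ₁+ℓ₂+⋯+ℓ_k = n} ∏_{i=1}^{k} binom(2ℓᵢ, ℓᵢ) = 2^n · ∏_{j=0}^{n−1} (k + 2j), where the sum is over all tuples (ℓ₁,…,ℓ_k) of nonnegative integers summing to n. -/
open scoped BigOperators

/-!
The series `φ = ∑ binom(2m, m) Xᵐ` is `(1 - 4X)^(-1/2)`, and the recursion for central binomial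
coefficients says exactly that `φ' = 4Xφ' + 2φ`. Hence `φᵏ` satisfies `(φᵏ)' = 4X(φᵏ)' + 2kφᵏ`,
i.e. its coefficients obey `(n + 1) aₙ₊₁ = (4n + 2k) aₙ`, which gives
`n! aₙ = 2ⁿ ∏_{j<n} (k + 2j)`. The sum in the theorem is `aₙ`, the `n`-th coefficient of `φᵏ`.
-/

namespace PowerSeries

variable {R : Type*} [CommSemiring R]

theorem coeff_pow_eq_sum_antidiagonalTuple (φ : R⟦X⟧) (k n : ℕ) :
    coeff n (φ ^ k) = ∑ ℓ ∈ Finset.Nat.antidiagonalTuple k n, ∏ i : Fin k, coeff (ℓ i) φ := by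
  rw [← Fin.prod_const, coeff_prod]
  refine Finset.sum_equiv Finsupp.equivFunOnFinite (fun f => ?_) (fun f _ => rfl)
  simp [Finset.Nat.mem_antidiagonalTuple]

theorem coeff_X_mul_derivative (φ : R⟦X⟧) (n : ℕ) :
    coeff n (X * d⁄dX R φ) = n * coeff n φ := by
  cases n with
  | zero => simp
  | succ n => rw [coeff_succ_X_mul, coeff_derivative, mul_comm]; push_cast; rfl

theorem coeff_ofNat_mul (m n : ℕ) [m.AtLeastTwo] (φ : R⟦X⟧) :
    coeff n (OfNat.ofNat m * φ) = OfNat.ofNat m * coeff n φ := by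
  rw [← map_ofNat C, coeff_C_mul]

end PowerSeries

theorem Derivation.map_pow_eq_of_map_eq_mul_add {S A : Type*} [CommSemiring S] [CommSemiring A]
    [Algebra S A] (D : Derivation S A A) {f g c : A} (h : D f = g * D f + c * f) (k : ℕ) :
    D (f ^ k) = g * D (f ^ k) + k * c * f ^ k := by
  induction k with
  | zero => simp
  | succ k ih =>
    rw [pow_succ, D.leibniz, smul_eq_mul, smul_eq_mul]
    nth_rewrite 1 [ih, h]
    push_cast
    ring

namespace GBS

open PowerSeries

variable (R : Type*) [CommSemiring R]

noncomputable def centralBinomSeries : R⟦X⟧ := mk fun m => (m.centralBinom : R)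

variable {R}

theorem coeff_centralBinomSeries (m : ℕ) : coeff m (centralBinomSeries R) = m.centralBinom :=
  coeff_mk _ _

theorem derivative_centralBinomSeries :
    d⁄dX R (centralBinomSeries R) =
      4 * X * d⁄dX R (centralBinomSeries R) + 2 * centralBinomSeries R := by
  ext (_ | m)
  all_goals rw [map_add, mul_assoc, coeff_ofNat_mul, coeff_ofNat_mul, coeff_X_mul_derivative,
      coeff_derivative, coeff_centralBinomSeries, coeff_centralBinomSeries]
  · simp [Nat.centralBinom, Nat.choose]
  · have key : (m + 1 + 1).centralBinom * (m + 1 + 1) =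
        4 * ((m + 1) * (m + 1).centralBinom) + 2 * (m + 1).centralBinom := by
      linarith [Nat.succ_mul_centralBinom_succ (m + 1)]
    exact_mod_cast congrArg (Nat.cast : ℕ → R) key

theorem succ_mul_coeff_succ_centralBinomSeries_pow (k n : ℕ) :
    (n + 1) * coeff (n + 1) (centralBinomSeries R ^ k) =
      (4 * n + 2 * k) * coeff n (centralBinomSeries R ^ k) := by
  have h := congrArg (coeff n)
    ((d⁄dX R).map_pow_eq_of_map_eq_mul_add derivative_centralBinomSeries k)
  rw [coeff_derivative, map_add, mul_assoc, coeff_ofNat_mul, coeff_X_mul_derivative,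
    ← map_natCast C, mul_assoc, coeff_C_mul, coeff_ofNat_mul] at h
  rw [mul_comm, h]
  ring

theorem factorial_mul_coeff_centralBinomSeries_pow (k n : ℕ) :
    n.factorial * coeff n (centralBinomSeries R ^ k) =
      2 ^ n * ∏ j ∈ Finset.range n, ((k : R) + 2 * j) := by
  induction n with
  | zero => simp [coeff_zero_eq_constantCoeff, centralBinomSeries]
  | succ n ih =>
    rw [Nat.factorial_succ, Nat.cast_mul, mul_comm ((n + 1 : ℕ) : R), mul_assoc, Nat.cast_succ,
      succ_mul_coeff_succ_centralBinomSeries_pow, mul_left_comm, ih, Finset.prod_range_succ]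
    ring

theorem factorial_mul_sum_centralBinom_general (k n : ℕ) :
    (n.factorial *
        ∑ ℓ ∈ Finset.Nat.antidiagonalTuple k n, ∏ i : Fin k, (2 * ℓ i).choose (ℓ i)) =
      2 ^ n * ∏ j ∈ Finset.range n, (k + 2 * j) := by
  simpa [coeff_pow_eq_sum_antidiagonalTuple, coeff_centralBinomSeries, Nat.centralBinom]
    using factorial_mul_coeff_centralBinomSeries_pow (R := ℕ) k n

/-- For `k ≥ 1` and `n ≥ 0`:
`n! · ∑_{ℓ₁+⋯+ℓ_k = n} ∏_i binom(2ℓᵢ, ℓᵢ) = 2^n · ∏_{j=0}^{n−1} (k + 2j)`,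
where the sum ranges over all `k`-tuples of nonnegative integers summing to `n`. -/
theorem factorial_mul_sum_centralBinom (k n : ℕ) (hk : 1 ≤ k) :
    (n.factorial *
        ∑ ℓ ∈ Finset.Nat.antidiagonalTuple k n, ∏ i : Fin k, (2 * ℓ i).choose (ℓ i)) =
      2 ^ n * ∏ j ∈ Finset.range n, (k + 2 * j) :=
  factorial_mul_sum_centralBinom_general k n

end GBS
end

section
/- Let (m_j) and (n_j) be sequences of positive natural numbers with m_j ≥ 2n_j for all j, n_j → ∞, and n_j²/m_j → 0. Then lim_{j→∞} binom(m_j + 2n_j − 1, 2n_j) / binom(m_j, 2n_j) = 1. -/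
/-!
Writing `k = 2n`, the ratio is `m(m+1)⋯(m+k-1) / (m(m-1)⋯(m-k+1))`, which is at least `1` and,
as long as `2k ≤ m`, at most `((m+k)/(m+1-k))^k ≤ exp(4k²/m) = exp(16 n²/m)`.
Since `n²/m → 0` forces `4n ≤ m` eventually, the ratio is squeezed between `1` and a sequence
tending to `exp 0 = 1`.
-/

open Filter

namespace GBS

theorem ascFactorial_le_pow_add' (M k : ℕ) : M.ascFactorial k ≤ (M + k) ^ k := by
  rcases M with _ | M
  · rcases k with _ | k <;> simp [Nat.zero_ascFactorial]
  · exact (Nat.ascFactorial_le_pow_add M k).trans (Nat.pow_le_pow_left (by omega) k)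

theorem add_le_exp_mul_add_one_sub {M k : ℕ} (h : 2 * k ≤ M) :
    (M + k : ℝ) ≤ Real.exp (4 * k / M) * (M + 1 - k) := by
  rcases Nat.eq_zero_or_pos M with rfl | hM
  · obtain rfl : k = 0 := by omega
    simp
  have hMR : (0 : ℝ) < M := by exact_mod_cast hM
  have hkR : (2 * k : ℝ) ≤ M := by exact_mod_cast h
  -- `M + 1 - k ≥ M / 2`, so the factor `1 + 4k/M` contributes at least `2k`.
  calc (M + k : ℝ) ≤ (M + 1 - k) + 4 * k / M * (M / 2) := by
        field_simp; linarith
    _ ≤ (1 + 4 * k / M) * (M + 1 - k) := by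
        rw [add_mul, one_mul]; gcongr; linarith
    _ ≤ Real.exp (4 * k / M) * (M + 1 - k) := by
        gcongr
        · linarith
        · linarith [Real.add_one_le_exp (4 * k / M)]

theorem ascFactorial_le_descFactorial_mul_exp {M k : ℕ} (h : 2 * k ≤ M) :
    (M.ascFactorial k : ℝ) ≤ M.descFactorial k * Real.exp (4 * k ^ 2 / M) := by
  have hsub : ((M + 1 - k : ℕ) : ℝ) = M + 1 - k := by
    rw [Nat.cast_sub (by omega)]; push_cast; ring
  have hdesc : (M + 1 - k : ℝ) ^ k ≤ M.descFactorial k := by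
    rw [← hsub]; exact_mod_cast Nat.pow_sub_le_descFactorial M k
  calc (M.ascFactorial k : ℝ) ≤ (M + k : ℝ) ^ k := by
        exact_mod_cast ascFactorial_le_pow_add' M k
    _ ≤ (Real.exp (4 * k / M) * (M + 1 - k)) ^ k := by
        gcongr; exact add_le_exp_mul_add_one_sub h
    _ = Real.exp (4 * k / M) ^ k * (M + 1 - k : ℝ) ^ k := mul_pow _ _ _
    _ ≤ Real.exp (4 * k / M) ^ k * M.descFactorial k := by gcongr
    _ = M.descFactorial k * Real.exp (4 * k ^ 2 / M) := by
        rw [← Real.exp_nat_mul, mul_comm]; congr 2; ring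

theorem choose_add_sub_one_le_choose_mul_exp {M k : ℕ} (h : 2 * k ≤ M) :
    ((M + k - 1).choose k : ℝ) ≤ M.choose k * Real.exp (4 * k ^ 2 / M) := by
  have hfact : (0 : ℝ) < k.factorial := by exact_mod_cast k.factorial_pos
  have hasc := ascFactorial_le_descFactorial_mul_exp h
  rw [Nat.ascFactorial_eq_factorial_mul_choose', Nat.descFactorial_eq_factorial_mul_choose] at hasc
  push_cast at hasc
  rw [mul_assoc] at hasc
  exact le_of_mul_le_mul_left hasc hfact

theorem choose_le_choose_add_sub_one (M k : ℕ) : M.choose k ≤ (M + k - 1).choose k := by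
  rcases k with _ | k
  · simp
  · exact Nat.choose_le_choose _ (by omega)

theorem eventually_four_mul_le {m n : ℕ → ℕ} (h2 : ∀ j, 2 * n j ≤ m j)
    (hratio : Tendsto (fun j => (n j : ℝ) ^ 2 / m j) atTop (nhds 0)) :
    ∀ᶠ j in atTop, 4 * n j ≤ m j := by
  filter_upwards [hratio.eventually (gt_mem_nhds (by norm_num : (0 : ℝ) < 1 / 4))] with j hj
  rcases Nat.eq_zero_or_pos (m j) with hm | hm
  · have h2j := h2 j; omega
  have hmR : (0 : ℝ) < m j := by exact_mod_cast hm
  have hsqR : (4 * n j ^ 2 : ℝ) < m j := by rw [div_lt_iff₀ hmR] at hj; linarith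
  have hsq : 4 * n j ^ 2 < m j := by exact_mod_cast hsqR
  nlinarith [Nat.le_self_pow two_ne_zero (n j)]

theorem tendsto_choose_ratio_general (m n : ℕ → ℕ)
    (h2 : ∀ j, 2 * n j ≤ m j)
    (hratio : Tendsto (fun j => (n j : ℝ) ^ 2 / m j) atTop (nhds 0)) :
    Tendsto (fun j =>
        (((m j + 2 * n j - 1).choose (2 * n j) : ℝ)) / ((m j).choose (2 * n j) : ℝ))
      atTop (nhds 1) := by
  have hpos : ∀ j, (0 : ℝ) < (m j).choose (2 * n j) := fun j => by
    exact_mod_cast Nat.choose_pos (h2 j)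
  have hexp : Tendsto (fun j => Real.exp (4 * ((2 * n j : ℕ) : ℝ) ^ 2 / m j)) atTop (nhds 1) := by
    refine Real.tendsto_exp_nhds_zero_nhds_one.comp ?_
    have := hratio.const_mul 16
    simp only [mul_zero] at this
    convert this using 2 with j
    push_cast; ring
  refine tendsto_of_tendsto_of_tendsto_of_le_of_le' tendsto_const_nhds hexp ?_ ?_
  · filter_upwards with j
    rw [le_div_iff₀ (hpos j), one_mul]
    exact_mod_cast choose_le_choose_add_sub_one _ _
  · filter_upwards [eventually_four_mul_le h2 hratio] with j hj
    rw [div_le_iff₀ (hpos j)]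
    exact (choose_add_sub_one_le_choose_mul_exp (M := m j) (k := 2 * n j) (by omega)).trans_eq
      (mul_comm _ _)

/-- Let `(m_j)`, `(n_j)` be sequences of positive naturals with
`m_j ≥ 2n_j`, `n_j → ∞`, and `n_j²/m_j → 0`. Then
`lim_{j→∞} binom(m_j + 2n_j − 1, 2n_j) / binom(m_j, 2n_j) = 1`. -/
theorem tendsto_choose_ratio (m n : ℕ → ℕ)
    (hm : ∀ j, 0 < m j) (hn : ∀ j, 0 < n j) (h2 : ∀ j, 2 * n j ≤ m j)
    (hninf : Tendsto n atTop atTop)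
    (hratio : Tendsto (fun j => (n j : ℝ) ^ 2 / m j) atTop (nhds 0)) :
    Tendsto (fun j =>
        (((m j + 2 * n j - 1).choose (2 * n j) : ℝ)) / ((m j).choose (2 * n j) : ℝ))
      atTop (nhds 1) :=
  tendsto_choose_ratio_general m n h2 hratio

end GBS
end

section
/- Let P and Q be nonnegative real random variables on a probability space with E[Q] > 0 and E[Q²] < ∞, and let 0 ≤ δ < 1 be such that |P − Q| ≤ δ · E[Q] holds almost surely. Then E[P²] / (E[P])² ≤ ( E[Q²]/(E[Q])² + 2δ + δ² ) / (1 − δ)². -/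
open MeasureTheory

namespace GBS

/-- Let `P, Q` be nonnegative real random variables on a probability space
with `E[Q] > 0` and `E[Q²] < ∞`, and let `0 ≤ δ < 1` be such that `|P − Q| ≤ δ·E[Q]` almost
surely. Then `E[P²]/(E[P])² ≤ (E[Q²]/(E[Q])² + 2δ + δ²)/(1 − δ)²`. -/
theorem second_moment_transfer {Ω : Type*} [MeasurableSpace Ω]
    (μ : Measure Ω) [IsProbabilityMeasure μ] (P Q : Ω → ℝ) (δ : ℝ)
    (hδ0 : 0 ≤ δ) (hδ1 : δ < 1)
    (hPmeas : AEStronglyMeasurable P μ)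
    (hP0 : ∀ᵐ ω ∂μ, 0 ≤ P ω) (hQ0 : ∀ᵐ ω ∂μ, 0 ≤ Q ω)
    (hQint : Integrable Q μ) (hQ2int : Integrable (fun ω => Q ω ^ 2) μ)
    (hEQ : 0 < ∫ ω, Q ω ∂μ)
    (hbound : ∀ᵐ ω ∂μ, |P ω - Q ω| ≤ δ * ∫ x, Q x ∂μ) :
    (∫ ω, P ω ^ 2 ∂μ) / (∫ ω, P ω ∂μ) ^ 2 ≤
      ((∫ ω, Q ω ^ 2 ∂μ) / (∫ ω, Q ω ∂μ) ^ 2 + 2 * δ + δ ^ 2) / (1 - δ) ^ 2 := by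
  set c : ℝ := ∫ ω, Q ω ∂μ with hc
  have hcpos : 0 < c := hEQ
  -- upper bound P ≤ Q + δc a.e.
  have hPQ : ∀ᵐ ω ∂μ, P ω ≤ Q ω + δ * c := by
    filter_upwards [hbound] with ω h
    have := abs_le.mp h
    linarith [this.2]
  have hQP : ∀ᵐ ω ∂μ, Q ω - δ * c ≤ P ω := by
    filter_upwards [hbound] with ω h
    have := abs_le.mp h
    linarith [this.1]
  -- the dominating function and its integrability
  have hdom : Integrable (fun ω => (Q ω + δ * c) ^ 2) μ := by
    have : Integrable (fun ω => Q ω ^ 2 + (2 * δ * c) * Q ω + (δ * c) ^ 2) μ :=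
      (hQ2int.add (hQint.const_mul _)).add (integrable_const _)
    refine this.congr (Filter.Eventually.of_forall fun ω => ?_)
    ring
  have hPint : Integrable P μ := by
    refine Integrable.mono' (hQint.add (integrable_const (δ * c))) hPmeas ?_
    filter_upwards [hP0, hPQ] with ω h0 h1
    simp only [Pi.add_apply, Real.norm_eq_abs, abs_of_nonneg h0]
    exact h1
  have hP2int : Integrable (fun ω => P ω ^ 2) μ := by
    refine Integrable.mono' hdom (hPmeas.pow 2) ?_
    filter_upwards [hP0, hPQ, hQ0] with ω h0 h1 hq0
    simp only [Real.norm_eq_abs, abs_of_nonneg (sq_nonneg (P ω))]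
    exact pow_le_pow_left₀ h0 h1 2
  -- second moment bound
  have hs : (∫ ω, P ω ^ 2 ∂μ) ≤ (∫ ω, Q ω ^ 2 ∂μ) + (2 * δ + δ ^ 2) * c ^ 2 := by
    have h1 : (∫ ω, P ω ^ 2 ∂μ) ≤ ∫ ω, (Q ω + δ * c) ^ 2 ∂μ := by
      refine integral_mono_ae hP2int hdom ?_
      filter_upwards [hP0, hPQ, hQ0] with ω h0 h1 hq0
      have : 0 ≤ Q ω + δ * c := by positivity
      exact pow_le_pow_left₀ h0 h1 2
    have h2 : ∫ ω, (Q ω + δ * c) ^ 2 ∂μ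
        = (∫ ω, Q ω ^ 2 ∂μ) + (2 * δ + δ ^ 2) * c ^ 2 := by
      have heq : (fun ω => (Q ω + δ * c) ^ 2)
          = fun ω => Q ω ^ 2 + ((2 * δ * c) * Q ω + (δ * c) ^ 2) := by
        funext ω; ring
      have hg : Integrable (fun ω => 2 * δ * c * Q ω + (δ * c) ^ 2) μ :=
        (hQint.const_mul _).add (integrable_const _)
      rw [heq, integral_add hQ2int hg,
        integral_add (hQint.const_mul (2 * δ * c)) (integrable_const ((δ * c) ^ 2)),
        integral_const_mul, integral_const]
      simp [← hc]
      ring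
    linarith
  -- first moment lower bound
  have ha : (1 - δ) * c ≤ ∫ ω, P ω ∂μ := by
    have h1 : ∫ ω, (Q ω - δ * c) ∂μ ≤ ∫ ω, P ω ∂μ :=
      integral_mono_ae (hQint.sub (integrable_const _)) hPint hQP
    have h2 : ∫ ω, (Q ω - δ * c) ∂μ = (1 - δ) * c := by
      rw [integral_sub hQint (integrable_const _), integral_const]
      simp [← hc]
      ring
    linarith
  have hapos : 0 < (1 - δ) * c := by
    have : 0 < 1 - δ := by linarith
    positivity
  have hs0 : 0 ≤ ∫ ω, P ω ^ 2 ∂μ := by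
    refine integral_nonneg_of_ae ?_
    filter_upwards [hP0] with ω h0
    positivity
  have hnum0 : 0 ≤ (∫ ω, Q ω ^ 2 ∂μ) + (2 * δ + δ ^ 2) * c ^ 2 := le_trans hs0 hs
  have key : (∫ ω, P ω ^ 2 ∂μ) / (∫ ω, P ω ∂μ) ^ 2 ≤
      ((∫ ω, Q ω ^ 2 ∂μ) + (2 * δ + δ ^ 2) * c ^ 2) / ((1 - δ) * c) ^ 2 := by
    refine div_le_div₀ hnum0 hs (by positivity) ?_
    have := ha
    nlinarith
  refine le_trans key (le_of_eq ?_)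
  have h1δ : (1 : ℝ) - δ ≠ 0 := by linarith
  have hcne : c ≠ 0 := ne_of_gt hcpos
  field_simp
  ring
end GBS
end
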